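/- arXiv:1708.01340 — 5 statements merged into one kernel-verified Lean document; each statement's English description precedes it below -/
import Mathlib

section
/- Let D ⊂ ℝ² be a closed rectangle with vertical sides A₀, A₁ and horizontal sides B₀, B₁, and let S ⊆ D be a compact set. If S contains no connected component intersecting both B₀ and B₁, then there exists a continuous curve γ : [0,1] → D with γ(0) ∈ A₀, γ(1) ∈ A₁, and γ(t) ∉ S ∪ B₀ ∪ B₁ for all t ∈ [0,1]. -/
/-!
A clopen subset of `S` separates the points of `S` on `B₀` from those on `B₁`; adding `B₀` and
`B₁` to the two pieces gives disjoint compacta `K₀ ⊇ B₀`, `K₁ ⊇ B₁` at some distance `δ > 0`.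
On a grid of mesh below `δ / 2`, colour the cells meeting `K₀` black and those meeting `K₁` red:
no black cell touches a red one, the bottom row is black and the top row red.
A walker entering at the lower left corner and keeping the black region on its right (a wall
follower) never runs into red cells. Its step map is injective on valid states, and the state
preceding the start could only be entered from further left, so the walk never repeats; as it
is confined to a finite box while inside the grid, it leaves the grid on the right.
Its route from the left to the right column runs through uncoloured cells, whose union is a
connected set in the open set avoiding `K₀ ∪ K₁`; hence it contains a path, and clamping the
first coordinate to `[x₀, x₁]` keeps that path in the rectangle.
-/

open Set

def KingAdj (c c' : ℤ × ℤ) : Prop := |c.1 - c'.1| ≤ 1 ∧ |c.2 - c'.2| ≤ 1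

lemma KingAdj.symm {c c' : ℤ × ℤ} (h : KingAdj c c') : KingAdj c' c :=
  ⟨abs_sub_comm c.1 c'.1 ▸ h.1, abs_sub_comm c.2 c'.2 ▸ h.2⟩

lemma exists_crossing_of_abs_sub_le_one {f : ℕ → ℤ} {n : ℤ} {K : ℕ} (hn : 0 < n)
    (h0 : f 0 < 0) (hK : n ≤ f K) (hstep : ∀ t, |f (t + 1) - f t| ≤ 1) :
    ∃ t₀ t₁, t₀ ≤ t₁ ∧ f t₀ = 0 ∧ f t₁ = n - 1 ∧ ∀ t ∈ Icc t₀ t₁, 0 ≤ f t ∧ f t < n := by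
  have hex : ∃ K, n ≤ f K := ⟨K, hK⟩
  obtain ⟨t₁, ht₁⟩ : ∃ t₁, Nat.find hex = t₁ + 1 := by
    refine Nat.exists_eq_add_one.mpr (Nat.pos_of_ne_zero fun h => ?_)
    have := Nat.find_spec hex
    rw [h] at this
    omega
  have hbelow : ∀ t ≤ t₁, f t < n := fun t ht => not_le.mp (Nat.find_min hex (by rw [ht₁]; omega))
  have hf₁ : f t₁ = n - 1 := by
    have h₁ := Nat.find_spec hex
    rw [ht₁] at h₁
    have := abs_le.mp (hstep t₁)
    have := hbelow t₁ le_rfl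
    omega
  set t₀ := Nat.findGreatest (fun t => f t < 0) t₁
  have hneg : f t₀ < 0 := Nat.findGreatest_spec (P := fun t => f t < 0) (Nat.zero_le _) h0
  have hlt : t₀ < t₁ := by
    refine lt_of_le_of_ne (Nat.findGreatest_le t₁) fun h => ?_
    rw [h] at hneg
    omega
  have habove : ∀ t, t₀ < t → t ≤ t₁ → 0 ≤ f t := fun t h₁ h₂ =>
    not_lt.mp (Nat.findGreatest_is_greatest h₁ h₂)
  refine ⟨t₀ + 1, t₁, hlt, ?_, hf₁, fun t ht =>
    ⟨habove t (Nat.lt_of_succ_le ht.1) ht.2, hbelow t ht.2⟩⟩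
  have := abs_le.mp (hstep t₀)
  have := habove (t₀ + 1) (by omega) hlt
  omega

namespace WallFollower

inductive Dir : Type
  | up | rgt | dwn | lft
  deriving DecidableEq

instance : Fintype Dir := ⟨{.up, .rgt, .dwn, .lft}, fun d => by cases d <;> simp⟩

namespace Dir

def vec : Dir → ℤ × ℤ
  | up => (0, 1) | rgt => (1, 0) | dwn => (0, -1) | lft => (-1, 0)

def rt : Dir → Dir
  | up => rgt | rgt => dwn | dwn => lft | lft => up

def lt : Dir → Dir
  | up => lft | lft => dwn | dwn => rgt | rgt => up

@[simp] lemma rt_lt (d : Dir) : d.lt.rt = d := by cases d <;> rfl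
@[simp] lemma lt_rt (d : Dir) : d.rt.lt = d := by cases d <;> rfl
@[simp] lemma vec_lt (d : Dir) : d.lt.vec = -d.rt.vec := by cases d <;> rfl
@[simp] lemma vec_rt_rt (d : Dir) : d.rt.rt.vec = -d.vec := by cases d <;> rfl

end Dir

/-- A state is a cell together with the direction the walker faces; the wall is on its right. -/
abbrev State := (ℤ × ℤ) × Dir

section Walk

variable (n : ℤ) (black red : ℤ × ℤ → Prop)

def InGrid (c : ℤ × ℤ) : Prop := 0 ≤ c.1 ∧ c.1 < n ∧ 0 ≤ c.2 ∧ c.2 < n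

def Solid (c : ℤ × ℤ) : Prop := c.2 < 0 ∨ (InGrid n c ∧ (black c ∨ red c))

def wall (s : State) : ℤ × ℤ := s.1 + s.2.rt.vec

def Valid (s : State) : Prop := ¬ Solid n black red s.1 ∧ Solid n black red (wall s)

attribute [local instance] Classical.propDecidable

noncomputable def succ (s : State) : State :=
  if Solid n black red (s.1 + s.2.vec) then (s.1, s.2.lt)
  else if Solid n black red (s.1 + s.2.vec + s.2.rt.vec) then (s.1 + s.2.vec, s.2)
  else (s.1 + s.2.vec + s.2.rt.vec, s.2.rt)

noncomputable def pred (s : State) : State :=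
  if Solid n black red (s.1 - s.2.vec) then (s.1, s.2.rt)
  else if Solid n black red (s.1 - s.2.vec + s.2.rt.vec) then (s.1 - s.2.vec, s.2)
  else (s.1 - s.2.vec + s.2.rt.vec, s.2.lt)

def start : State := ((-1, 0), .up)

noncomputable def orb (k : ℕ) : State := (succ n black red)^[k] start

/-- The cells that must lie on the walker's right: the lower half plane and the black cells. -/
def Blackish (c : ℤ × ℤ) : Prop := c.2 < 0 ∨ (InGrid n c ∧ black c)

variable {n black red}

lemma valid_succ {s : State} (h : Valid n black red s) :
    Valid n black red (succ n black red s) := by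
  obtain ⟨hfree, hwall⟩ := h
  unfold succ
  split_ifs with hfront hdiag
  · exact ⟨hfree, by simpa [wall] using hfront⟩
  · exact ⟨hfront, by simpa [wall] using hdiag⟩
  · refine ⟨hdiag, ?_⟩
    simpa [wall, add_assoc] using hwall

lemma pred_succ {s : State} (h : Valid n black red s) :
    pred n black red (succ n black red s) = s := by
  obtain ⟨c, d⟩ := s
  obtain ⟨hfree, hwall⟩ := h
  have hwall' : Solid n black red (c + d.rt.vec) := hwall
  have hback : c + d.vec + -d.vec = c := by abel
  simp only [succ]
  split_ifs with hfront hdiag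
  · simp only [pred, Dir.rt_lt, Dir.vec_lt, sub_neg_eq_add]
    rw [if_pos hwall']
  · simp only [pred, add_sub_cancel_right]
    rw [if_neg hfree, if_pos hwall']
  · simp only [pred, Dir.lt_rt, add_sub_cancel_right, Dir.vec_rt_rt, hback]
    rw [if_neg hfront, if_neg hfree]

lemma succ_inj_of_valid {s t : State} (hs : Valid n black red s) (ht : Valid n black red t)
    (h : succ n black red s = succ n black red t) : s = t := by
  rw [← pred_succ hs, ← pred_succ ht, h]

lemma succ_eq_or (s : State) :
    succ n black red s = (s.1, s.2.lt) ∨ succ n black red s = (s.1 + s.2.vec, s.2) ∨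
      succ n black red s = (s.1 + s.2.vec + s.2.rt.vec, s.2.rt) := by
  unfold succ; split_ifs <;> simp

lemma kingAdj_succ (s : State) : KingAdj (succ n black red s).1 s.1 := by
  obtain ⟨c, d⟩ := s
  rcases succ_eq_or (n := n) (black := black) (red := red) (c, d) with h | h | h <;> rw [h] <;>
    cases d <;> simp [KingAdj, Dir.vec, Dir.rt]

lemma kingAdj_wall_succ (s : State) : KingAdj (wall (succ n black red s)) (wall s) := by
  obtain ⟨c, d⟩ := s
  rcases succ_eq_or (n := n) (black := black) (red := red) (c, d) with h | h | h <;> rw [h] <;>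
    cases d <;> simp [KingAdj, wall, Dir.vec, Dir.rt, Dir.lt]

lemma snd_nonneg_of_valid {s : State} (hv : Valid n black red s) : 0 ≤ s.1.2 := by
  by_contra h
  exact hv.1 (Or.inl (by omega))

lemma orb_succ (k : ℕ) : orb n black red (k + 1) = succ n black red (orb n black red k) :=
  Function.iterate_succ_apply' _ _ _

lemma kingAdj_orb_succ (k : ℕ) : KingAdj (orb n black red (k + 1)).1 (orb n black red k).1 := by
  rw [orb_succ]; exact kingAdj_succ _

variable (hn : 0 < n) (hb : ∀ i, 0 ≤ i → i < n → black (i, 0))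
  (hr : ∀ i, 0 ≤ i → i < n → red (i, n - 1))
  (hsep : ∀ c c', black c → red c' → KingAdj c c' → False)

lemma wall_start : wall start = (0, 0) := by simp [wall, start, Dir.rt, Dir.vec]

section
include hb hsep

lemma blackish_of_kingAdj {c c' : ℤ × ℤ} (hc : Blackish n black c) (hc' : Solid n black red c')
    (hadj : KingAdj c' c) : Blackish n black c' := by
  obtain ⟨h1, h2⟩ := hadj
  rw [abs_le] at h1 h2
  rcases hc' with hlow | ⟨hgrid, hblack | hred⟩
  · exact Or.inl hlow
  · exact Or.inr ⟨hgrid, hblack⟩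
  exfalso
  rcases hc with hlow | ⟨-, hblack⟩
  · obtain ⟨g1, g2, g3, -⟩ := hgrid
    have hrow : c' = (c'.1, 0) := Prod.ext rfl (by omega)
    exact hsep _ _ (hb c'.1 g1 g2) hred (by rw [← hrow]; simp [KingAdj])
  · exact hsep c c' hblack hred ⟨by rw [abs_le]; omega, by rw [abs_le]; omega⟩

end

/-- At `i = -1` the wall can only be on the right (facing up) or below (facing right), so the
walker never steps further left. -/
lemma neg_one_le_succ_fst {s : State} (hv : Valid n black red s) (h : -1 ≤ s.1.1) :
    -1 ≤ (succ n black red s).1.1 := by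
  have hadj := abs_le.mp (kingAdj_succ (n := n) (black := black) (red := red) s).1
  rcases le_or_gt 0 s.1.1 with hi | hi
  · omega
  obtain ⟨⟨i, j⟩, d⟩ := s
  have hi : i = -1 := by simp only at h hi; omega
  have hj : 0 ≤ j := snd_nonneg_of_valid hv
  subst hi
  cases d
  case up | rgt =>
    rcases succ_eq_or (n := n) (black := black) (red := red) ((-1, j), _) with hc | hc | hc <;>
      rw [hc] <;> simp [Dir.vec, Dir.rt]
  case dwn | lft =>
    exfalso
    rcases hv.2 with hlow | ⟨⟨hgrid, -⟩, -⟩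
    · simp [wall, Dir.rt, Dir.vec] at hlow; omega
    · simp [wall, Dir.rt, Dir.vec] at hgrid

lemma pred_start : pred n black red start = ((-1, 0), .rgt) := by
  simp [pred, start, Solid, Dir.vec, Dir.rt]

lemma pred_pred_start : pred n black red ((-1, 0), .rgt) = ((-2, 0), .rgt) := by
  simp [pred, Solid, InGrid, Dir.vec, Dir.rt]

section
include hn hb

lemma blackish_wall_start : Blackish n black (wall start) := by
  rw [wall_start]
  exact Or.inr ⟨⟨le_rfl, by omega, le_rfl, by omega⟩, hb 0 le_rfl (by omega)⟩

lemma valid_start : Valid n black red start := by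
  refine ⟨?_, ?_⟩
  · rintro (h | ⟨⟨h, -⟩, -⟩) <;> simp [start] at h
  · rcases blackish_wall_start hn hb with h | ⟨hgrid, hblack⟩
    exacts [Or.inl h, Or.inr ⟨hgrid, Or.inl hblack⟩]

lemma valid_orb (k : ℕ) : Valid n black red (orb n black red k) := by
  induction k with
  | zero => exact valid_start hn hb
  | succ k ih => rw [orb_succ]; exact valid_succ ih

lemma neg_one_le_orb_fst (k : ℕ) : -1 ≤ (orb n black red k).1.1 := by
  induction k with
  | zero => simp [orb, start]
  | succ k ih => rw [orb_succ]; exact neg_one_le_succ_fst (valid_orb hn hb k) ih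

/-- The walker never returns to `start`: otherwise, by injectivity, it would arrive there from
`pred start`, and before that from `pred (pred start)`, which lies left of column `-1`. -/
lemma orb_ne_pred_start (k : ℕ) : orb n black red k ≠ pred n black red start := by
  rw [pred_start]
  cases k with
  | zero => simp [orb, start]
  | succ k =>
    intro h
    have hprev := pred_succ (valid_orb (red := red) hn hb k)
    rw [← orb_succ, h, pred_pred_start] at hprev
    have := neg_one_le_orb_fst hn hb k (red := red)
    rw [← hprev] at this
    norm_num at this

lemma orb_sub_eq_start {a b : ℕ} (hab : a ≤ b) (h : orb n black red a = orb n black red b) :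
    orb n black red (b - a) = start := by
  induction a generalizing b with
  | zero => simpa [orb] using h.symm
  | succ a ih =>
    obtain ⟨b, rfl⟩ : ∃ b', b = b' + 1 := ⟨b - 1, by omega⟩
    rw [orb_succ, orb_succ] at h
    simpa using ih (by omega) (succ_inj_of_valid (valid_orb hn hb a) (valid_orb hn hb b) h)

lemma orb_ne_start {k : ℕ} (hk : k ≠ 0) : orb n black red k ≠ start := by
  obtain ⟨k, rfl⟩ := Nat.exists_eq_succ_of_ne_zero hk
  intro h
  apply orb_ne_pred_start hn hb k
  rw [← h, orb_succ, pred_succ (valid_orb hn hb k)]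

lemma orb_injective : Function.Injective (orb n black red) := by
  intro a b h
  by_contra hne
  rcases Nat.lt_or_gt_of_ne hne with hlt | hlt
  · exact orb_ne_start hn hb (by omega) (orb_sub_eq_start hn hb hlt.le h)
  · exact orb_ne_start hn hb (by omega) (orb_sub_eq_start hn hb hlt.le h.symm)

end

section
include hn hb hsep

lemma blackish_wall_orb (k : ℕ) : Blackish n black (wall (orb n black red k)) := by
  induction k with
  | zero => exact blackish_wall_start hn hb
  | succ k ih =>
    rw [orb_succ]
    exact blackish_of_kingAdj hb hsep ih (valid_succ (valid_orb hn hb k)).2 (kingAdj_wall_succ _)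

include hr

/-- The top row is red, hence not black, so the wall stays below it. -/
lemma orb_snd_lt (k : ℕ) : (orb n black red k).1.2 < n := by
  have hwall := blackish_wall_orb (red := red) hn hb hsep k
  set s := orb n black red k
  have hadj : |s.1.2 - (wall s).2| ≤ 1 := by
    obtain ⟨c, d⟩ := s
    cases d <;> simp [wall, Dir.rt, Dir.vec]
  rw [abs_le] at hadj
  rcases hwall with hlow | ⟨⟨g1, g2, -, g4⟩, hblack⟩
  · omega
  · have htop : (wall s).2 ≠ n - 1 := by
      intro htop
      have hred := hr _ g1 g2
      rw [← htop] at hred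
      exact hsep _ _ hblack hred (by simp [KingAdj])
    omega

/-- The orbit is injective and stays in a finite box unless it leaves the grid to the right. -/
lemma exists_le_orb_fst : ∃ k, n ≤ (orb n black red k).1.1 := by
  by_contra! hlt
  refine Set.infinite_range_of_injective (orb_injective (red := red) hn hb)
    (((Set.finite_Icc ((-1 : ℤ), (0 : ℤ)) (n - 1, n - 1)).prod Set.finite_univ).subset ?_)
  rintro _ ⟨k, rfl⟩
  have h₁ := neg_one_le_orb_fst (red := red) hn hb k
  have h₂ := snd_nonneg_of_valid (valid_orb (red := red) hn hb k)
  have h₃ := orb_snd_lt hn hb hr hsep k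
  have h₄ := hlt k
  refine ⟨⟨?_, ?_⟩, trivial⟩ <;> simp only [Prod.le_def] <;> omega

theorem exists_white_chain : ∃ (c : ℕ → ℤ × ℤ) (t₀ t₁ : ℕ), t₀ ≤ t₁ ∧ (c t₀).1 = 0 ∧
    (c t₁).1 = n - 1 ∧ (∀ t ∈ Icc t₀ t₁, InGrid n (c t) ∧ ¬ black (c t) ∧ ¬ red (c t)) ∧
    ∀ t, KingAdj (c (t + 1)) (c t) := by
  obtain ⟨K, hK⟩ := exists_le_orb_fst hn hb hr hsep
  obtain ⟨t₀, t₁, hle, h₀, h₁, hcols⟩ := exists_crossing_of_abs_sub_le_one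
    (f := fun t => (orb n black red t).1.1) hn (by simp [orb, start]) hK
    (fun t => (kingAdj_orb_succ t).1)
  refine ⟨fun t => (orb n black red t).1, t₀, t₁, hle, h₀, h₁, fun t ht => ?_, kingAdj_orb_succ⟩
  have hgrid : InGrid n (orb n black red t).1 := ⟨(hcols t ht).1, (hcols t ht).2,
    snd_nonneg_of_valid (valid_orb hn hb t), orb_snd_lt hn hb hr hsep t⟩
  have hfree := (valid_orb (red := red) hn hb t).1
  exact ⟨hgrid, fun h => hfree (Or.inr ⟨hgrid, Or.inl h⟩),
    fun h => hfree (Or.inr ⟨hgrid, Or.inr h⟩)⟩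

end

end Walk

end WallFollower

lemma exists_isClopen_of_disjoint_connectedComponent {X : Type*} [TopologicalSpace X]
    [T2Space X] [CompactSpace X] {F₀ F₁ : Set X} (h₀ : IsClosed F₀) (h₁ : IsClosed F₁)
    (hF : ∀ x ∈ F₀, Disjoint (connectedComponent x) F₁) :
    ∃ U : Set X, IsClopen U ∧ F₀ ⊆ U ∧ Disjoint U F₁ := by
  let π : X → ConnectedComponents X := ConnectedComponents.mk
  have hπ : Continuous π := ConnectedComponents.continuous_coe
  have hdisj : π '' F₀ ⊆ (π '' F₁)ᶜ := by
    rintro _ ⟨x, hx, rfl⟩ ⟨y, hy, hxy⟩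
    exact (hF x hx).notMem_of_mem_left (ConnectedComponents.coe_eq_coe'.mp hxy) hy
  obtain ⟨C, hC, hFC, hCF⟩ := exists_clopen_of_closed_subset_open
    (h₀.isCompact.image hπ).isClosed (h₁.isCompact.image hπ).isClosed.isOpen_compl hdisj
  exact ⟨π ⁻¹' C, hC.preimage hπ, fun x hx => hFC ⟨x, hx, rfl⟩,
    Set.disjoint_left.mpr fun x hxC hx₁ => hCF hxC ⟨x, hx₁, rfl⟩⟩

/-- The components of `S` meeting `B₀` are split off from those meeting `B₁` by a clopen subset
of `S`; adding `B₀` and `B₁` to the two pieces gives disjoint compact sets. -/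
lemma IsCompact.exists_disjoint_cover_of_not_isConnected {X : Type*} [TopologicalSpace X]
    [T2Space X] {S B₀ B₁ : Set X} (hS : IsCompact S) (hB₀ : IsCompact B₀) (hB₁ : IsCompact B₁)
    (hB : Disjoint B₀ B₁)
    (h : ¬ ∃ C : Set X, C ⊆ S ∧ IsConnected C ∧ (C ∩ B₀).Nonempty ∧ (C ∩ B₁).Nonempty) :
    ∃ K₀ K₁ : Set X, IsCompact K₀ ∧ IsCompact K₁ ∧ Disjoint K₀ K₁ ∧ B₀ ⊆ K₀ ∧ B₁ ⊆ K₁ ∧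
      S ∪ B₀ ∪ B₁ ⊆ K₀ ∪ K₁ := by
  have : CompactSpace S := isCompact_iff_compactSpace.mp hS
  have hF : ∀ x ∈ ((↑) : S → X) ⁻¹' B₀, Disjoint (connectedComponent x) ((↑) ⁻¹' B₁) := by
    refine fun x hx => Set.disjoint_left.mpr fun y hy hy₁ => h ⟨(↑) '' connectedComponent x,
      ?_, isConnected_connectedComponent.image _ continuous_subtype_val.continuousOn,
      ⟨x, mem_image_of_mem _ mem_connectedComponent, hx⟩, ⟨y, mem_image_of_mem _ hy, hy₁⟩⟩
    rintro _ ⟨z, -, rfl⟩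
    exact z.2
  obtain ⟨U, hU, hB₀U, hUB₁⟩ := exists_isClopen_of_disjoint_connectedComponent
    (hB₀.isClosed.preimage continuous_subtype_val) (hB₁.isClosed.preimage continuous_subtype_val)
    hF
  refine ⟨(↑) '' U ∪ B₀, (↑) '' Uᶜ ∪ B₁,
    (hU.isClosed.isCompact.image continuous_subtype_val).union hB₀,
    (hU.isOpen.isClosed_compl.isCompact.image continuous_subtype_val).union hB₁, ?_,
    subset_union_right, subset_union_right, ?_⟩
  · refine disjoint_union_left.mpr ⟨disjoint_union_right.mpr
      ⟨(disjoint_image_iff Subtype.val_injective).mpr disjoint_compl_right, ?_⟩,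
      disjoint_union_right.mpr ⟨?_, hB⟩⟩
    · refine Set.disjoint_left.mpr ?_
      rintro _ ⟨x, hxU, rfl⟩ hx₁
      exact hUB₁.notMem_of_mem_left hxU hx₁
    · refine Set.disjoint_left.mpr ?_
      rintro _ hx₀ ⟨x, hxU, rfl⟩
      exact hxU (hB₀U hx₀)
  · refine union_subset (union_subset (fun x hx => ?_) ?_) ?_
    · by_cases hxU : (⟨x, hx⟩ : S) ∈ U
      exacts [Or.inl (Or.inl ⟨_, hxU, rfl⟩), Or.inr (Or.inl ⟨_, hxU, rfl⟩)]
    · exact subset_union_right.trans subset_union_left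
    · exact subset_union_right.trans subset_union_right

lemma exists_pos_forall_lt_dist {X : Type*} [PseudoMetricSpace X] {s t : Set X}
    (hs : IsCompact s) (ht : IsClosed t) (hst : Disjoint s t) :
    ∃ δ : ℝ, 0 < δ ∧ ∀ x ∈ s, ∀ y ∈ t, δ < dist x y := by
  obtain ⟨r, hr, h⟩ := Metric.exists_pos_forall_lt_edist hs ht hst
  refine ⟨r, hr, fun x hx y hy => ?_⟩
  have := h x hx y hy
  rw [edist_nndist, ENNReal.coe_lt_coe] at this
  exact_mod_cast this

lemma IsPreconnected.joinedIn_of_isOpen {X : Type*} [TopologicalSpace X]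
    [LocallyPathConnectedSpace X] {U F : Set X} (hU : IsPreconnected U) (hF : IsOpen F)
    (hUF : U ⊆ F) {a b : X} (ha : a ∈ U) (hb : b ∈ U) : JoinedIn F a b := by
  have haF := hUF ha
  have hpath : IsPathConnected (_root_.connectedComponentIn F a) :=
    hF.connectedComponentIn.isConnected_iff_isPathConnected.mp
      (isConnected_connectedComponentIn_iff.mpr haF)
  exact (hpath.joinedIn a (mem_connectedComponentIn haF) b
    (hU.subset_connectedComponentIn ha hUF hb)).mono (connectedComponentIn_subset F a)

lemma IsPreconnected.joinedIn_inter_range {X : Type*} [TopologicalSpace X]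
    [LocallyPathConnectedSpace X] {r : X → X} (hr : Continuous r) {U O : Set X}
    (hU : IsPreconnected U) (hO : IsOpen O) (hUO : U ⊆ O) (hrU : ∀ x ∈ U, r x = x)
    {a b : X} (ha : a ∈ U) (hb : b ∈ U) : JoinedIn (O ∩ range r) a b := by
  have hJ := (hU.joinedIn_of_isOpen (hO.preimage hr)
    (fun x hx => by simpa [hrU x hx] using hUO hx) ha hb).map hr
  rwa [hrU a ha, hrU b hb, image_preimage_eq_inter_range] at hJ

def gridCell (x₀ y₀ w h : ℝ) (c : ℤ × ℤ) : Set (ℝ × ℝ) :=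
  Icc (x₀ + c.1 * w) (x₀ + (c.1 + 1) * w) ×ˢ Icc (y₀ + c.2 * h) (y₀ + (c.2 + 1) * h)

section GridCell

variable {x₀ y₀ w h : ℝ}

lemma add_mul_mem_Icc_add_mul {a w i m : ℝ} (hw : 0 ≤ w) (h₁ : i ≤ m) (h₂ : m ≤ i + 1) :
    a + m * w ∈ Icc (a + i * w) (a + (i + 1) * w) :=
  ⟨by gcongr, by gcongr⟩

lemma abs_sub_le_of_mem_Icc_add_mul {a w s t : ℝ} {i j : ℤ} (hw : 0 ≤ w) (hij : |i - j| ≤ 1)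
    (hs : s ∈ Icc (a + i * w) (a + (i + 1) * w)) (ht : t ∈ Icc (a + j * w) (a + (j + 1) * w)) :
    |s - t| ≤ 2 * w := by
  have hij' : |(i : ℝ) - j| ≤ 1 := by exact_mod_cast hij
  rw [abs_le] at hij' ⊢
  obtain ⟨hs₁, hs₂⟩ := hs
  obtain ⟨ht₁, ht₂⟩ := ht
  constructor <;> nlinarith

variable (hw : 0 ≤ w) (hh : 0 ≤ h)
include hw hh

lemma corner_mem_gridCell (c : ℤ × ℤ) : (x₀ + c.1 * w, y₀ + c.2 * h) ∈ gridCell x₀ y₀ w h c :=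
  ⟨add_mul_mem_Icc_add_mul hw le_rfl (by linarith), add_mul_mem_Icc_add_mul hh le_rfl (by linarith)⟩

lemma isConnected_gridCell (c : ℤ × ℤ) : IsConnected (gridCell x₀ y₀ w h c) :=
  ⟨⟨_, corner_mem_gridCell hw hh c⟩, ((convex_Icc _ _).prod (convex_Icc _ _)).isPreconnected⟩

lemma gridCell_inter_nonempty {c c' : ℤ × ℤ} (hadj : KingAdj c c') :
    (gridCell x₀ y₀ w h c ∩ gridCell x₀ y₀ w h c').Nonempty := by
  have hmax : ∀ i j : ℤ, |i - j| ≤ 1 → (i : ℝ) ≤ (max i j : ℤ) ∧ ((max i j : ℤ) : ℝ) ≤ i + 1 := by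
    intro i j hij
    rw [abs_le] at hij
    exact ⟨by exact_mod_cast le_max_left i j, by exact_mod_cast (by omega : max i j ≤ i + 1)⟩
  have h₁ := hmax _ _ hadj.1
  have h₂ := hmax _ _ hadj.2
  have h₁' := hmax _ _ hadj.symm.1
  have h₂' := hmax _ _ hadj.symm.2
  rw [max_comm] at h₁' h₂'
  exact ⟨(x₀ + (max c.1 c'.1 : ℤ) * w, y₀ + (max c.2 c'.2 : ℤ) * h),
    ⟨add_mul_mem_Icc_add_mul hw h₁.1 h₁.2, add_mul_mem_Icc_add_mul hh h₂.1 h₂.2⟩,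
    ⟨add_mul_mem_Icc_add_mul hw h₁'.1 h₁'.2, add_mul_mem_Icc_add_mul hh h₂'.1 h₂'.2⟩⟩

lemma dist_le_of_mem_gridCell {c c' : ℤ × ℤ} (hadj : KingAdj c c') {p q : ℝ × ℝ}
    (hp : p ∈ gridCell x₀ y₀ w h c) (hq : q ∈ gridCell x₀ y₀ w h c') :
    dist p q ≤ 2 * max w h := by
  rw [Prod.dist_eq, Real.dist_eq, Real.dist_eq]
  exact max_le
    ((abs_sub_le_of_mem_Icc_add_mul hw hadj.1 hp.1 hq.1).trans (by gcongr; exact le_max_left _ _))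
    ((abs_sub_le_of_mem_Icc_add_mul hh hadj.2 hp.2 hq.2).trans (by gcongr; exact le_max_right _ _))

lemma gridCell_subset {n : ℤ} {c : ℤ × ℤ} (hc : WallFollower.InGrid n c) :
    gridCell x₀ y₀ w h c ⊆ Icc x₀ (x₀ + n * w) ×ˢ Icc y₀ (y₀ + n * h) := by
  obtain ⟨h₁, h₂, h₃, h₄⟩ := hc
  have h₁' : (0 : ℝ) ≤ c.1 := by exact_mod_cast h₁
  have h₂' : (c.1 : ℝ) + 1 ≤ n := by exact_mod_cast h₂
  have h₃' : (0 : ℝ) ≤ c.2 := by exact_mod_cast h₃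
  have h₄' : (c.2 : ℝ) + 1 ≤ n := by exact_mod_cast h₄
  rintro p ⟨⟨hp₁, hp₂⟩, hp₃, hp₄⟩
  refine ⟨⟨?_, ?_⟩, ?_, ?_⟩ <;> nlinarith

end GridCell

lemma exists_isConnected_crossing_of_grid {x₀ y₀ w h δ : ℝ} {n : ℤ} (hn : 0 < n) (hw : 0 ≤ w)
    (hh : 0 ≤ h) (hmesh : 2 * max w h < δ) {K₀ K₁ : Set (ℝ × ℝ)}
    (hK : ∀ p ∈ K₀, ∀ q ∈ K₁, δ < dist p q) (hB₀ : Icc x₀ (x₀ + n * w) ×ˢ {y₀} ⊆ K₀)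
    (hB₁ : Icc x₀ (x₀ + n * w) ×ˢ {y₀ + n * h} ⊆ K₁) :
    ∃ U : Set (ℝ × ℝ), IsConnected U ∧
      U ⊆ (Icc x₀ (x₀ + n * w) ×ˢ Icc y₀ (y₀ + n * h)) \ (K₀ ∪ K₁) ∧
      (∃ y, (x₀, y) ∈ U) ∧ ∃ y, (x₀ + n * w, y) ∈ U := by
  set cell := gridCell x₀ y₀ w h
  have hcol : ∀ i : ℤ, 0 ≤ i → i < n → x₀ + i * w ∈ Icc x₀ (x₀ + n * w) := fun i h₀ h₁ =>
    ⟨by nlinarith [(Int.cast_nonneg h₀ : (0 : ℝ) ≤ i)],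
      by nlinarith [(Int.cast_le.mpr h₁.le : (i : ℝ) ≤ n)]⟩
  have hb : ∀ i : ℤ, 0 ≤ i → i < n → (cell (i, 0) ∩ K₀).Nonempty := fun i h₀ h₁ =>
    ⟨_, corner_mem_gridCell hw hh (i, 0), hB₀ ⟨hcol i h₀ h₁, by simp⟩⟩
  have hr : ∀ i : ℤ, 0 ≤ i → i < n → (cell (i, n - 1) ∩ K₁).Nonempty := fun i h₀ h₁ =>
    ⟨(x₀ + i * w, y₀ + n * h), ⟨(corner_mem_gridCell (y₀ := y₀) hw hh (i, n - 1)).1,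
      add_mul_mem_Icc_add_mul hh (by push_cast; linarith) (by push_cast; linarith)⟩,
      hB₁ ⟨hcol i h₀ h₁, rfl⟩⟩
  have hsep : ∀ c c', (cell c ∩ K₀).Nonempty → (cell c' ∩ K₁).Nonempty → KingAdj c c' → False := by
    rintro c c' ⟨p, hpc, hpK⟩ ⟨q, hqc, hqK⟩ hadj
    linarith [hK p hpK q hqK, dist_le_of_mem_gridCell hw hh hadj hpc hqc]
  obtain ⟨c, t₀, t₁, hle, hc₀, hc₁, hwhite, hadj⟩ := WallFollower.exists_white_chain hn hb hr hsep
  have hc₁' : ((c t₁).1 : ℝ) = n - 1 := by rw [hc₁]; push_cast; ring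
  refine ⟨⋃ t ∈ Icc t₀ t₁, cell (c t), ?_, ?_, ⟨y₀ + (c t₀).2 * h, mem_biUnion ⟨le_rfl, hle⟩ ?_⟩,
    ⟨y₀ + (c t₁).2 * h, mem_biUnion ⟨hle, le_rfl⟩ ?_⟩⟩
  · refine IsConnected.biUnion_of_chain ⟨t₀, le_rfl, hle⟩ ordConnected_Icc
      (fun t _ => isConnected_gridCell hw hh _) fun t _ _ => ?_
    rw [Order.succ_eq_add_one]
    exact gridCell_inter_nonempty hw hh (hadj t).symm
  · intro p hp
    obtain ⟨t, ht, hp⟩ := mem_iUnion₂.mp hp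
    obtain ⟨hgrid, hnb, hnr⟩ := hwhite t ht
    exact ⟨gridCell_subset hw hh hgrid hp, fun hpK =>
      hpK.elim (fun h₀ => hnb ⟨p, hp, h₀⟩) fun h₁ => hnr ⟨p, hp, h₁⟩⟩
  · simpa [hc₀] using corner_mem_gridCell (x₀ := x₀) (y₀ := y₀) hw hh (c t₀)
  · exact ⟨add_mul_mem_Icc_add_mul hw (by linarith) (by linarith),
      (corner_mem_gridCell (x₀ := x₀) hw hh (c t₁)).2⟩

lemma Icc_prod_Icc_diff_subset {x₀ x₁ y₀ y₁ : ℝ} {K₀ K₁ : Set (ℝ × ℝ)}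
    (hB₀ : Icc x₀ x₁ ×ˢ {y₀} ⊆ K₀) (hB₁ : Icc x₀ x₁ ×ˢ {y₁} ⊆ K₁) :
    Icc x₀ x₁ ×ˢ Icc y₀ y₁ \ (K₀ ∪ K₁) ⊆ Icc x₀ x₁ ×ˢ Ioo y₀ y₁ \ (K₀ ∪ K₁) := by
  rintro p ⟨⟨hp₁, hp₂⟩, hpK⟩
  exact ⟨⟨hp₁, lt_of_le_of_ne hp₂.1 fun h => hpK (Or.inl (hB₀ ⟨hp₁, h.symm⟩)),
    lt_of_le_of_ne hp₂.2 fun h => hpK (Or.inr (hB₁ ⟨hp₁, h⟩))⟩, hpK⟩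

lemma exists_isConnected_crossing {x₀ x₁ y₀ y₁ δ : ℝ} (hx : x₀ < x₁) (hy : y₀ < y₁) (hδ : 0 < δ)
    {K₀ K₁ : Set (ℝ × ℝ)} (hK : ∀ p ∈ K₀, ∀ q ∈ K₁, δ < dist p q)
    (hB₀ : Icc x₀ x₁ ×ˢ {y₀} ⊆ K₀) (hB₁ : Icc x₀ x₁ ×ˢ {y₁} ⊆ K₁) :
    ∃ U : Set (ℝ × ℝ), IsConnected U ∧ U ⊆ (Icc x₀ x₁ ×ˢ Ioo y₀ y₁) \ (K₀ ∪ K₁) ∧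
      (∃ y, (x₀, y) ∈ U) ∧ ∃ y, (x₁, y) ∈ U := by
  obtain ⟨n, hn⟩ := exists_nat_gt (2 * max (x₁ - x₀) (y₁ - y₀) / δ)
  have hn₀ : (0 : ℝ) < n :=
    (div_pos (mul_pos two_pos (lt_max_of_lt_left (sub_pos.2 hx))) hδ).trans hn
  have hmesh : 2 * max ((x₁ - x₀) / n) ((y₁ - y₀) / n) < δ := by
    rw [div_lt_iff₀ hδ] at hn
    rw [max_div_div_right hn₀.le, mul_div_assoc', div_lt_iff₀ hn₀]
    linarith
  have hxn : x₀ + ((n : ℤ) : ℝ) * ((x₁ - x₀) / n) = x₁ := by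
    rw [Int.cast_natCast, mul_div_cancel₀ _ hn₀.ne']; ring
  have hyn : y₀ + ((n : ℤ) : ℝ) * ((y₁ - y₀) / n) = y₁ := by
    rw [Int.cast_natCast, mul_div_cancel₀ _ hn₀.ne']; ring
  obtain ⟨U, hU, hUsub, hleft, hright⟩ := exists_isConnected_crossing_of_grid (n := n)
    (by exact_mod_cast hn₀) (div_pos (sub_pos.2 hx) hn₀).le (div_pos (sub_pos.2 hy) hn₀).le hmesh
    hK (by rwa [hxn]) (by rwa [hxn, hyn])
  rw [hxn, hyn] at hUsub
  rw [hxn] at hright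
  exact ⟨U, hU, hUsub.trans (Icc_prod_Icc_diff_subset hB₀ hB₁), hleft, hright⟩

theorem stmt2_general
    (x₀ x₁ y₀ y₁ : ℝ) (hx : x₀ < x₁) (hy : y₀ < y₁)
    (D : Set (ℝ × ℝ)) (hD : D = Icc x₀ x₁ ×ˢ Icc y₀ y₁)
    (A₀ A₁ B₀ B₁ : Set (ℝ × ℝ))
    (hA₀ : A₀ = {x₀} ×ˢ Icc y₀ y₁) (hA₁ : A₁ = {x₁} ×ˢ Icc y₀ y₁)
    (hB₀ : B₀ = Icc x₀ x₁ ×ˢ {y₀}) (hB₁ : B₁ = Icc x₀ x₁ ×ˢ {y₁})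
    (S : Set (ℝ × ℝ)) (hS : IsCompact S)
    (hcomp : ¬ ∃ C : Set (ℝ × ℝ), C ⊆ S ∧ IsConnected C ∧
      (C ∩ B₀).Nonempty ∧ (C ∩ B₁).Nonempty) :
    ∃ γ : ℝ → ℝ × ℝ, ContinuousOn γ (Icc 0 1) ∧
      γ 0 ∈ A₀ ∧ γ 1 ∈ A₁ ∧
      ∀ t ∈ Icc (0:ℝ) 1, γ t ∈ D ∧ γ t ∉ S ∪ B₀ ∪ B₁ := by
  have hB : Disjoint B₀ B₁ := by
    rw [hB₀, hB₁]
    exact disjoint_prod.mpr (Or.inr (disjoint_singleton.mpr hy.ne))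
  obtain ⟨K₀, K₁, hK₀, hK₁, hK, hBK₀, hBK₁, hcover⟩ := hS.exists_disjoint_cover_of_not_isConnected
    (hB₀ ▸ isCompact_Icc.prod isCompact_singleton) (hB₁ ▸ isCompact_Icc.prod isCompact_singleton)
    hB hcomp
  obtain ⟨δ, hδ, hsep⟩ := exists_pos_forall_lt_dist hK₀ hK₁.isClosed hK
  obtain ⟨U, hU, hUsub, ⟨a, ha⟩, ⟨b, hb⟩⟩ :=
    exists_isConnected_crossing hx hy hδ hsep (hB₀ ▸ hBK₀) (hB₁ ▸ hBK₁)
  let r : ℝ × ℝ → ℝ × ℝ := fun p => (projIcc x₀ x₁ hx.le p.1, p.2)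
  obtain ⟨γ, hγ⟩ : JoinedIn ((univ ×ˢ Ioo y₀ y₁ \ (K₀ ∪ K₁)) ∩ range r) (x₀, a) (x₁, b) :=
    hU.isPreconnected.joinedIn_inter_range (by fun_prop)
      ((isOpen_univ.prod isOpen_Ioo).sdiff (hK₀.union hK₁).isClosed)
      (fun p hp => ⟨⟨trivial, (hUsub hp).1.2⟩, (hUsub hp).2⟩)
      (fun p hp => by simp [r, projIcc_of_mem hx.le (hUsub hp).1.1]) ha hb
  refine ⟨γ.extend, γ.continuous_extend.continuousOn, ?_, ?_, fun t ht => ?_⟩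
  · rw [γ.extend_zero, hA₀]
    exact ⟨rfl, Ioo_subset_Icc_self (hUsub ha).1.2⟩
  · rw [γ.extend_one, hA₁]
    exact ⟨rfl, Ioo_subset_Icc_self (hUsub hb).1.2⟩
  · rw [γ.extend_apply ht]
    obtain ⟨⟨⟨-, hγy⟩, hγK⟩, p, hp⟩ := hγ ⟨t, ht⟩
    refine ⟨hD ▸ ⟨hp ▸ (projIcc x₀ x₁ hx.le p.1).2, Ioo_subset_Icc_self hγy⟩,
      fun hγS => hγK (hcover hγS)⟩

theorem stmt2
    (x₀ x₁ y₀ y₁ : ℝ) (hx : x₀ < x₁) (hy : y₀ < y₁)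
    (D : Set (ℝ × ℝ)) (hD : D = Icc x₀ x₁ ×ˢ Icc y₀ y₁)
    (A₀ A₁ B₀ B₁ : Set (ℝ × ℝ))
    (hA₀ : A₀ = {x₀} ×ˢ Icc y₀ y₁) (hA₁ : A₁ = {x₁} ×ˢ Icc y₀ y₁)
    (hB₀ : B₀ = Icc x₀ x₁ ×ˢ {y₀}) (hB₁ : B₁ = Icc x₀ x₁ ×ˢ {y₁})
    (S : Set (ℝ × ℝ)) (hSD : S ⊆ D) (hS : IsCompact S)
    (hcomp : ¬ ∃ C : Set (ℝ × ℝ), C ⊆ S ∧ IsConnected C ∧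
      (C ∩ B₀).Nonempty ∧ (C ∩ B₁).Nonempty) :
    ∃ γ : ℝ → ℝ × ℝ, ContinuousOn γ (Icc 0 1) ∧
      γ 0 ∈ A₀ ∧ γ 1 ∈ A₁ ∧
      ∀ t ∈ Icc (0:ℝ) 1, γ t ∈ D ∧ γ t ∉ S ∪ B₀ ∪ B₁ :=
  stmt2_general x₀ x₁ y₀ y₁ hx hy D hD A₀ A₁ B₀ B₁ hA₀ hA₁ hB₀ hB₁ S hS hcomp
end

section
/- Let X be a real Banach space, I = [a₀, b₀] a compact interval, and f : ℝ × X → ℝ a C¹ function. Let a < b be real values that are regular values of f_λ for every λ ∈ I, and suppose f satisfies the Palais–Smale conditions (PS)_{I,a} and (PS)_{I,b}, and that ∂f/∂λ is bounded on the set {(λ, x) ∈ I × X : f(λ, x) ∈ U_δ} for some δ > 0, where U_δ = (a−δ, a+δ) ∪ (b−δ, b+δ). Then there exists a bounded, locally Lipschitz vector field v : ℝ × X → X such that ∂f/∂λ(λ, x) + f'_λ(x)[v(λ, x)] < 0 whenever λ ∈ I and f_λ(x) ∈ {a, b}. -/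
/-!
As `a` and `b` are regular values, the Palais–Smale conditions and the compactness of
`[a₀, b₀]` give `ε < ‖∂ₓf‖` on the closed set `K = {(λ, x) | λ ∈ [a₀, b₀], f (λ, x) ∈ {a, b}}`.
With the bound `∂f/∂λ ≤ M` on `K`, near each point of `K` one fixed vector `w` with
`‖w‖ ≤ (|M| + 1) / ε` satisfies `∂f/∂λ + ∂ₓf w < 0`, and away from `K` the vector `0` will do.
These conditions are convex in `w`, so the local choices glue, through a locally finite
partition of unity made of the `1`-Lipschitz functions `infDist · Vᶜ`, into a bounded locally
Lipschitz field.
-/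

open Filter Topology Set Metric Function

namespace LocallyLipschitz

variable {Y E : Type*} [PseudoMetricSpace Y]

theorem smul [NormedAddCommGroup E] [NormedSpace ℝ E] {f : Y → ℝ} {g : Y → E}
    (hf : LocallyLipschitz f) (hg : LocallyLipschitz g) :
    LocallyLipschitz fun y => f y • g y :=
  (contDiff_smul (𝕜 := ℝ) (n := 1)).locallyLipschitz.comp (hf.prodMk hg)

theorem inv₀ {f : Y → ℝ} (hf : LocallyLipschitz f) (h0 : ∀ y, f y ≠ 0) :
    LocallyLipschitz fun y => (f y)⁻¹ := by
  intro y
  obtain ⟨K, t, ht, hft⟩ := hf y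
  obtain ⟨L, u, hu, hinv⟩ := (contDiffAt_inv ℝ (n := 1) (h0 y)).exists_lipschitzOnWith
  exact ⟨L * K, t ∩ f ⁻¹' u, inter_mem ht (hf.continuous.continuousAt hu),
    hinv.comp (hft.mono inter_subset_left) ((mapsTo_preimage f u).mono_left inter_subset_right)⟩

theorem sum [SeminormedAddCommGroup E] {ι : Type*} (s : Finset ι) {φ : ι → Y → E}
    (hφ : ∀ i ∈ s, LocallyLipschitz (φ i)) : LocallyLipschitz fun y => ∑ i ∈ s, φ i y := by
  classical
  induction s using Finset.induction_on with
  | empty => simpa using LocallyLipschitz.const (0 : E)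
  | insert i s hi ih =>
    simp_rw [Finset.sum_insert hi]
    exact (hφ i (Finset.mem_insert_self i s)).add
      (ih fun j hj => hφ j (Finset.mem_insert_of_mem hj))

theorem finsum [SeminormedAddCommGroup E] {ι : Type*} {φ : ι → Y → E}
    (hφ : ∀ i, LocallyLipschitz (φ i)) (hfin : LocallyFinite fun i => support (φ i)) :
    LocallyLipschitz fun y => ∑ᶠ i, φ i y := by
  intro y
  obtain ⟨s, hs⟩ := finsum_eventually_eq_sum hfin y
  obtain ⟨K, t, ht, hK⟩ := LocallyLipschitz.sum s (fun i _ => hφ i) y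
  refine ⟨K, t ∩ {z | ∑ᶠ i, φ i z = ∑ i ∈ s, φ i z}, inter_mem ht hs, ?_⟩
  intro z hz w hw
  dsimp only
  rw [hz.2, hw.2]
  exact hK hz.1 hw.1

end LocallyLipschitz

theorem exists_locallyLipschitz_forall_mem_convex_of_local_const
    {Y E : Type*} [PseudoMetricSpace Y] [NormedAddCommGroup E] [NormedSpace ℝ E]
    {t : Y → Set E} (ht : ∀ y, Convex ℝ (t y)) (H : ∀ y, ∃ c : E, ∀ᶠ z in 𝓝 y, c ∈ t z) :
    ∃ v : Y → E, LocallyLipschitz v ∧ ∀ y, v y ∈ t y := by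
  -- `infDist z ∅ = 0`, so the bumps `infDist · (V i)ᶜ` below are positive on `V i` only when
  -- `V i ≠ univ`, which the second case guarantees.
  by_cases hglobal : ∃ c, ∀ y, c ∈ t y
  · obtain ⟨c, hc⟩ := hglobal
    exact ⟨fun _ => c, .const c, hc⟩
  push Not at hglobal
  choose c hc using H
  obtain ⟨V, hVo, hVcov, hVfin, hVU⟩ := precise_refinement (fun y => interior {z | c y ∈ t z})
    (fun _ => isOpen_interior)
    (iUnion_eq_univ_iff.2 fun y => ⟨y, mem_interior_iff_mem_nhds.2 (hc y)⟩)
  set ψ : Y → Y → ℝ := fun i z => infDist z (V i)ᶜ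
  have hψ_pos : ∀ i z, z ∈ V i → 0 < ψ i z := by
    intro i z hz
    obtain ⟨z', hz'⟩ := hglobal (c i)
    have hz'V : z' ∈ (V i)ᶜ := fun h => hz' (interior_subset (s := {z | c i ∈ t z}) (hVU i h))
    exact ((hVo i).isClosed_compl.notMem_iff_infDist_pos ⟨z', hz'V⟩).1 (not_not.2 hz)
  have hψ_supp : ∀ i, support (ψ i) ⊆ V i := fun i z hz => by
    by_contra h
    exact hz (infDist_zero_of_mem h)
  have hψ_fin : LocallyFinite fun i => support (ψ i) := hVfin.subset hψ_supp
  have hψ_lip : ∀ i, LocallyLipschitz (ψ i) := fun i => (lipschitz_infDist_pt _).locallyLipschitz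
  set S : Y → ℝ := fun z => ∑ᶠ i, ψ i z
  have hS_pos : ∀ z, 0 < S z := by
    intro z
    obtain ⟨i, hi⟩ := iUnion_eq_univ_iff.1 hVcov z
    exact finsum_pos (fun _ => infDist_nonneg) ⟨i, hψ_pos i z hi⟩
      ((hψ_fin.point_finite z).subset fun j hj => hj)
  have hS_lip : LocallyLipschitz fun z => (S z)⁻¹ :=
    (LocallyLipschitz.finsum hψ_lip hψ_fin).inv₀ fun z => (hS_pos z).ne'
  refine ⟨fun z => ∑ᶠ i, ((S z)⁻¹ * ψ i z) • c i, ?_, fun z => ?_⟩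
  · refine LocallyLipschitz.finsum (fun i => (hS_lip.smul (hψ_lip i)).smul (.const (c i))) ?_
    exact hψ_fin.subset fun i => support_subset_iff'.2 fun z hz => by simp [notMem_support.1 hz]
  · refine (ht z).finsum_mem (fun i => mul_nonneg (inv_nonneg.2 (hS_pos z).le) infDist_nonneg) ?_ ?_
    · rw [← mul_finsum, inv_mul_cancel₀ (hS_pos z).ne']
    · intro i hi
      exact interior_subset (s := {z | c i ∈ t z}) (hVU i (hψ_supp i (right_ne_zero_of_mul hi)))

theorem ContinuousLinearMap.exists_norm_le_apply_eq {E : Type*} [NormedAddCommGroup E]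
    [NormedSpace ℝ E] (φ : E →L[ℝ] ℝ) {ε : ℝ} (hε : 0 < ε) (hφ : ε < ‖φ‖) (r : ℝ) :
    ∃ w, ‖w‖ ≤ |r| / ε ∧ φ w = r := by
  obtain ⟨u, hu, hφu⟩ := φ.exists_lt_apply_of_lt_opNorm hφ
  have hφu₀ : φ u ≠ 0 := norm_pos_iff.1 (hε.trans hφu)
  refine ⟨(r / φ u) • u, ?_, by simp [hφu₀]⟩
  calc ‖(r / φ u) • u‖ = |r| / ‖φ u‖ * ‖u‖ := by rw [norm_smul, norm_div, Real.norm_eq_abs]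
    _ ≤ |r| / ε * 1 := by gcongr
    _ = |r| / ε := mul_one _

theorem exists_locallyLipschitz_add_apply_neg {Y E : Type*} [PseudoMetricSpace Y]
    [NormedAddCommGroup E] [NormedSpace ℝ E] {K : Set Y} (hK : IsClosed K) {h : Y → ℝ}
    {g : Y → E →L[ℝ] ℝ} (hh : Continuous h) (hg : Continuous g) {M ε : ℝ} (hε : 0 < ε)
    (hhM : ∀ y ∈ K, h y ≤ M) (hgε : ∀ y ∈ K, ε < ‖g y‖) :
    ∃ v : Y → E, (∀ y, ‖v y‖ ≤ (|M| + 1) / ε) ∧ LocallyLipschitz v ∧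
      ∀ y ∈ K, h y + g y (v y) < 0 := by
  set C := (|M| + 1) / ε
  set t : Y → Set E := fun y => closedBall 0 C ∩ {w | y ∈ K → g y w < -h y}
  have ht : ∀ y, Convex ℝ (t y) := by
    intro y
    refine (convex_closedBall 0 C).inter ?_
    by_cases hy : y ∈ K
    · simpa [hy] using convex_halfSpace_lt (g y).toLinearMap.isLinear (-h y)
    · simpa [hy] using convex_univ
  have hlocal : ∀ y, ∃ w : E, ∀ᶠ z in 𝓝 y, w ∈ t z := by
    intro y
    by_cases hy : y ∈ K
    · obtain ⟨w, hwC, hgw⟩ := (g y).exists_norm_le_apply_eq hε (hgε y hy) (-(|M| + 1))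
      rw [abs_neg, abs_of_pos (by positivity)] at hwC
      have hlt : g y w < -h y := by linarith [hhM y hy, le_abs_self M]
      refine ⟨w, ?_⟩
      filter_upwards [(isOpen_lt (hg.clm_apply continuous_const) hh.neg).mem_nhds hlt] with z hz
      exact ⟨mem_closedBall_zero_iff.2 hwC, fun _ => hz⟩
    · refine ⟨0, ?_⟩
      filter_upwards [hK.isOpen_compl.mem_nhds hy] with z hz
      exact ⟨mem_closedBall_self (by positivity), fun hzK => absurd hzK hz⟩
  obtain ⟨v, hv, hvt⟩ := exists_locallyLipschitz_forall_mem_convex_of_local_const ht hlocal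
  refine ⟨v, fun y => mem_closedBall_zero_iff.1 (hvt y).1, hv, fun y hy => ?_⟩
  linarith [(hvt y).2 hy]

theorem IsClosed.exists_pos_forall_lt_norm {Y F : Type*} [TopologicalSpace Y]
    [NormedAddCommGroup F] {K : Set Y} (hK : IsClosed K) {g : Y → F} (hg : Continuous g)
    (hg₀ : ∀ y ∈ K, g y ≠ 0)
    (hPS : ∀ y : ℕ → Y, (∀ n, y n ∈ K) → Tendsto (fun n => g (y n)) atTop (𝓝 0) →
      ∃ φ : ℕ → ℕ, StrictMono φ ∧ ∃ z, Tendsto (y ∘ φ) atTop (𝓝 z)) :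
    ∃ ε > 0, ∀ y ∈ K, ε < ‖g y‖ := by
  by_contra! h
  choose y hyK hy using fun n : ℕ => h (1 / (n + 1)) Nat.one_div_pos_of_nat
  have hgy : Tendsto (fun n => g (y n)) atTop (𝓝 0) :=
    squeeze_zero_norm hy tendsto_one_div_add_atTop_nhds_zero_nat
  obtain ⟨φ, hφ, z, hz⟩ := hPS y hyK hgy
  have hzK : z ∈ K := hK.mem_of_tendsto hz (Eventually.of_forall fun n => hyK _)
  exact hg₀ z hzK (tendsto_nhds_unique ((hg.tendsto z).comp hz) (hgy.comp hφ.tendsto_atTop))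

theorem exists_tendsto_subseq_of_palaisSmale {P X F : Type*} [PseudoMetricSpace P]
    [TopologicalSpace X] [TopologicalSpace F] [Zero F] {Λ : Set P} {C : Set ℝ} (hΛ : IsCompact Λ)
    (hC : IsCompact C) {f : P × X → ℝ} {g : P × X → F}
    (hPS : ∀ c ∈ C, ∀ (l : ℕ → P) (x : ℕ → X), (∀ n, l n ∈ Λ) →
      Tendsto (fun n => f (l n, x n)) atTop (𝓝 c) →
      Tendsto (fun n => g (l n, x n)) atTop (𝓝 0) →
      ∃ φ : ℕ → ℕ, StrictMono φ ∧ ∃ x₀ : X, Tendsto (fun k => x (φ k)) atTop (𝓝 x₀))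
    {y : ℕ → P × X} (hy : ∀ n, (y n).1 ∈ Λ ∧ f (y n) ∈ C)
    (hgy : Tendsto (fun n => g (y n)) atTop (𝓝 0)) :
    ∃ φ : ℕ → ℕ, StrictMono φ ∧ ∃ z, Tendsto (y ∘ φ) atTop (𝓝 z) := by
  obtain ⟨c, hc, φ, hφ, hfc⟩ := hC.tendsto_subseq fun n => (hy n).2
  obtain ⟨ψ, hψ, x₀, hx⟩ := hPS c hc (fun n => (y (φ n)).1) (fun n => (y (φ n)).2)
    (fun n => (hy _).1) hfc (hgy.comp hφ.tendsto_atTop)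
  obtain ⟨l₀, -, χ, hχ, hl⟩ := hΛ.tendsto_subseq fun n => (hy (φ (ψ n))).1
  exact ⟨φ ∘ ψ ∘ χ, hφ.comp (hψ.comp hχ), (l₀, x₀), hl.prodMk_nhds (hx.comp hχ.tendsto_atTop)⟩

section
variable {𝕜 E F G : Type*} [NontriviallyNormedField 𝕜] [NormedAddCommGroup E] [NormedSpace 𝕜 E]
  [NormedAddCommGroup F] [NormedSpace 𝕜 F] [NormedAddCommGroup G] [NormedSpace 𝕜 G]

theorem DifferentiableAt.fderiv_comp_prodMk_right {f : E × F → G} {e : E} {x : F}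
    (hf : DifferentiableAt 𝕜 f (e, x)) :
    fderiv 𝕜 (fun y => f (e, y)) x = (fderiv 𝕜 f (e, x)).comp (.inr 𝕜 E F) :=
  (hf.hasFDerivAt.comp x (hasFDerivAt_prodMk_right e x)).fderiv

theorem DifferentiableAt.deriv_comp_prodMk_left {f : 𝕜 × F → G} {l : 𝕜} {x : F}
    (hf : DifferentiableAt 𝕜 f (l, x)) :
    deriv (fun s => f (s, x)) l = fderiv 𝕜 f (l, x) (1, 0) := by
  simpa [Function.comp_def] using
    (hf.hasFDerivAt.comp l (hasFDerivAt_prodMk_left l x)).hasDerivAt.deriv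
end

theorem stmt5_general
    {X : Type*} [NormedAddCommGroup X] [NormedSpace ℝ X]
    (a₀ b₀ : ℝ) (f : ℝ × X → ℝ) (hf : ContDiff ℝ 1 f)
    (a b : ℝ)
    (hreg : ∀ l ∈ Icc a₀ b₀, ∀ x : X, (f (l, x) = a ∨ f (l, x) = b) →
      fderiv ℝ (fun y => f (l, y)) x ≠ 0)
    (hPS : ∀ c ∈ ({a, b} : Set ℝ), ∀ (l : ℕ → ℝ) (x : ℕ → X),
      (∀ n, l n ∈ Icc a₀ b₀) →
      Tendsto (fun n => f (l n, x n)) atTop (𝓝 c) →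
      Tendsto (fun n => fderiv ℝ (fun y => f (l n, y)) (x n)) atTop (𝓝 0) →
      ∃ φ : ℕ → ℕ, StrictMono φ ∧ ∃ x₀ : X,
        Tendsto (fun k => x (φ k)) atTop (𝓝 x₀))
    (δ : ℝ) (hδ : 0 < δ)
    (hbound : ∃ M : ℝ, ∀ l ∈ Icc a₀ b₀, ∀ x : X,
      f (l, x) ∈ Ioo (a - δ) (a + δ) ∪ Ioo (b - δ) (b + δ) →
      |deriv (fun s => f (s, x)) l| ≤ M) :
    ∃ v : ℝ × X → X,
      (∃ M : ℝ, ∀ p : ℝ × X, ‖v p‖ ≤ M) ∧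
      LocallyLipschitz v ∧
      ∀ l ∈ Icc a₀ b₀, ∀ x : X, (f (l, x) = a ∨ f (l, x) = b) →
        deriv (fun s => f (s, x)) l
          + fderiv ℝ (fun y => f (l, y)) x (v (l, x)) < 0 := by
  obtain ⟨M, hM⟩ := hbound
  have hdiff : Differentiable ℝ f := hf.differentiable one_ne_zero
  have hf' : Continuous (fderiv ℝ f) := hf.continuous_fderiv one_ne_zero
  simp only [fun l x => (hdiff (l, x)).fderiv_comp_prodMk_right,
    fun l x => (hdiff (l, x)).deriv_comp_prodMk_left] at hreg hPS hM ⊢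
  set K : Set (ℝ × X) := {y | y.1 ∈ Icc a₀ b₀ ∧ f y ∈ ({a, b} : Set ℝ)}
  have hK : IsClosed K :=
    (isClosed_Icc.preimage continuous_fst).inter
      ((toFinite ({a, b} : Set ℝ)).isClosed.preimage hf.continuous)
  obtain ⟨ε, hε, hεK⟩ := hK.exists_pos_forall_lt_norm (hf'.clm_comp_const _)
    (fun y hy => hreg y.1 hy.1 y.2 hy.2)
    (fun y hy hgy => exists_tendsto_subseq_of_palaisSmale isCompact_Icc
      (toFinite ({a, b} : Set ℝ)).isCompact (g := fun y => (fderiv ℝ f y).comp (.inr ℝ ℝ X))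
      hPS hy hgy)
  have hMK : ∀ y ∈ K, fderiv ℝ f y (1, 0) ≤ M := by
    rintro ⟨l, x⟩ ⟨hl, hx⟩
    refine (le_abs_self _).trans (hM l hl x ?_)
    rcases hx with rfl | rfl
    exacts [Or.inl ⟨by linarith, by linarith⟩, Or.inr ⟨by linarith, by linarith⟩]
  obtain ⟨v, hvC, hv, hvK⟩ := exists_locallyLipschitz_add_apply_neg hK
    (hf'.clm_apply continuous_const) (hf'.clm_comp_const _) hε hMK hεK
  exact ⟨v, ⟨_, hvC⟩, hv, fun l hl x hx => hvK (l, x) ⟨hl, hx⟩⟩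

theorem stmt5
    {X : Type*} [NormedAddCommGroup X] [NormedSpace ℝ X] [CompleteSpace X]
    (a₀ b₀ : ℝ) (f : ℝ × X → ℝ) (hf : ContDiff ℝ 1 f)
    (a b : ℝ) (hab : a < b)
    (hreg : ∀ l ∈ Icc a₀ b₀, ∀ x : X, (f (l, x) = a ∨ f (l, x) = b) →
      fderiv ℝ (fun y => f (l, y)) x ≠ 0)
    (hPS : ∀ c ∈ ({a, b} : Set ℝ), ∀ (l : ℕ → ℝ) (x : ℕ → X),
      (∀ n, l n ∈ Icc a₀ b₀) →
      Tendsto (fun n => f (l n, x n)) atTop (𝓝 c) →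
      Tendsto (fun n => fderiv ℝ (fun y => f (l n, y)) (x n)) atTop (𝓝 0) →
      ∃ φ : ℕ → ℕ, StrictMono φ ∧ ∃ x₀ : X,
        Tendsto (fun k => x (φ k)) atTop (𝓝 x₀))
    (δ : ℝ) (hδ : 0 < δ)
    (hbound : ∃ M : ℝ, ∀ l ∈ Icc a₀ b₀, ∀ x : X,
      f (l, x) ∈ Ioo (a - δ) (a + δ) ∪ Ioo (b - δ) (b + δ) →
      |deriv (fun s => f (s, x)) l| ≤ M) :
    ∃ v : ℝ × X → X,
      (∃ M : ℝ, ∀ p : ℝ × X, ‖v p‖ ≤ M) ∧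
      LocallyLipschitz v ∧
      ∀ l ∈ Icc a₀ b₀, ∀ x : X, (f (l, x) = a ∨ f (l, x) = b) →
        deriv (fun s => f (s, x)) l
          + fderiv ℝ (fun y => f (l, y)) x (v (l, x)) < 0 :=
  stmt5_general a₀ b₀ f hf a b hreg hPS δ hδ hbound
end

section
/- Let X be a real Banach space and v : ℝ × X → X a bounded, locally Lipschitz vector field, generating the global flow φ : ℝ × ℝ × X → X with ∂φ/∂t(t, λ, x) = v(t + λ, φ(t, λ, x)) and φ(0, λ, x) = x. Let f : ℝ × X → ℝ be C¹ and a ∈ ℝ. Suppose that for all (λ, x) with λ + t ∈ [−1,1] and f(λ + t, φ(t, λ, x)) = a, one has ∂f/∂λ(λ+t, φ(t,λ,x)) + f'_{λ+t}(φ(t,λ,x))[v(λ+t, φ(t,λ,x))] < 0. Then for every λ ∈ [−1,1] and t ≥ 0 with λ + t ∈ [−1,1]: if f(λ, x) ≤ a, then f(λ + t, φ(t, λ, x)) ≤ a. That is, φ(t, λ, ·) maps the sublevel set {f_λ ≤ a} into {f_{λ+t} ≤ a}. -/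
/-! Along a trajectory, `g s = f (λ + s, φ s λ x)` has derivative
`∂f/∂λ + f'_{λ+s}[v]` by the chain rule, and this is negative whenever `g s = a`.
A function starting at or below `a` whose derivative is negative at every point where it
touches `a` stays below `a` (the fencing theorem `image_le_of_deriv_right_lt_deriv_boundary'`). -/

open Set

section PartialDerivatives

variable {X F : Type*} [NormedAddCommGroup X] [NormedSpace ℝ X]
  [NormedAddCommGroup F] [NormedSpace ℝ F]

theorem fderiv_apply_one_prodMk {f : ℝ × X → F} {p : ℝ × X} (hf : DifferentiableAt ℝ f p)
    (w : X) :
    fderiv ℝ f p (1, w)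
      = deriv (fun u => f (u, p.2)) p.1 + fderiv ℝ (fun y => f (p.1, y)) p.2 w := by
  have h₁ : HasDerivAt (fun u => f (u, p.2)) (fderiv ℝ f p (1, 0)) p.1 :=
    hf.hasFDerivAt.comp_hasDerivAt_of_eq p.1
      ((hasDerivAt_id p.1).prodMk (hasDerivAt_const p.1 p.2)) rfl
  have h₂ : HasFDerivAt (fun y => f (p.1, y))
      ((fderiv ℝ f p).comp (ContinuousLinearMap.inr ℝ ℝ X)) p.2 :=
    hf.hasFDerivAt.comp p.2 (hasFDerivAt_prodMk_right p.1 p.2)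
  rw [h₁.deriv, h₂.fderiv, ContinuousLinearMap.comp_apply, ContinuousLinearMap.inr_apply,
    ← map_add, Prod.mk_add_mk, add_zero, zero_add]

theorem hasDerivAt_comp_add_prodMk {f : ℝ × X → F} {γ : ℝ → X} {w : X} {l s : ℝ}
    (hf : DifferentiableAt ℝ f (l + s, γ s)) (hγ : HasDerivAt γ w s) :
    HasDerivAt (fun u => f (l + u, γ u))
      (deriv (fun u => f (u, γ s)) (l + s) + fderiv ℝ (fun y => f (l + s, y)) (γ s) w) s := by
  have hcurve : HasDerivAt (fun u => (l + u, γ u)) ((1 : ℝ), w) s :=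
    ((hasDerivAt_id s).const_add l).prodMk hγ
  rw [← fderiv_apply_one_prodMk hf]
  exact hf.hasFDerivAt.comp_hasDerivAt s hcurve

end PartialDerivatives

theorem stmt6_general
    {X : Type*} [NormedAddCommGroup X] [NormedSpace ℝ X]
    (v : ℝ × X → X)
    (φ : ℝ → ℝ → X → X)
    (hφ0 : ∀ l x, φ 0 l x = x)
    (hφ' : ∀ t l x, HasDerivAt (fun s => φ s l x) (v (t + l, φ t l x)) t)
    (f : ℝ × X → ℝ) (hf : ContDiff ℝ 1 f) (a : ℝ)
    (hsign : ∀ l x t, l + t ∈ Icc (-1:ℝ) 1 → f (l + t, φ t l x) = a →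
      deriv (fun s => f (s, φ t l x)) (l + t)
        + fderiv ℝ (fun y => f (l + t, y)) (φ t l x) (v (l + t, φ t l x)) < 0) :
    ∀ l ∈ Icc (-1:ℝ) 1, ∀ t : ℝ, 0 ≤ t → l + t ∈ Icc (-1:ℝ) 1 →
      ∀ x : X, f (l, x) ≤ a → f (l + t, φ t l x) ≤ a := by
  intro l hl t ht hlt x hfx
  have hderiv : ∀ s, HasDerivAt (fun u => f (l + u, φ u l x))
      (deriv (fun u => f (u, φ s l x)) (l + s)
        + fderiv ℝ (fun y => f (l + s, y)) (φ s l x) (v (l + s, φ s l x))) s := fun s =>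
    hasDerivAt_comp_add_prodMk (hf.differentiable one_ne_zero _) (add_comm s l ▸ hφ' s l x)
  refine image_le_of_deriv_right_lt_deriv_boundary' (B := fun _ => a) (B' := fun _ => 0)
    (fun s _ => (hderiv s).continuousAt.continuousWithinAt)
    (fun s _ => (hderiv s).hasDerivWithinAt) (by simpa [hφ0] using hfx)
    continuousOn_const (fun s _ => hasDerivWithinAt_const s _ a)
    (fun s hs => hsign l x s ⟨by linarith [hl.1, hs.1], by linarith [hlt.2, hs.2]⟩)
    ⟨ht, le_rfl⟩

theorem stmt6
    {X : Type*} [NormedAddCommGroup X] [NormedSpace ℝ X] [CompleteSpace X]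
    (v : ℝ × X → X)
    (hvb : ∃ M : ℝ, ∀ p : ℝ × X, ‖v p‖ ≤ M)
    (hvl : LocallyLipschitz v)
    (φ : ℝ → ℝ → X → X)
    (hφ0 : ∀ l x, φ 0 l x = x)
    (hφ' : ∀ t l x, HasDerivAt (fun s => φ s l x) (v (t + l, φ t l x)) t)
    (f : ℝ × X → ℝ) (hf : ContDiff ℝ 1 f) (a : ℝ)
    (hsign : ∀ l x t, l + t ∈ Icc (-1:ℝ) 1 → f (l + t, φ t l x) = a →
      deriv (fun s => f (s, φ t l x)) (l + t)
        + fderiv ℝ (fun y => f (l + t, y)) (φ t l x) (v (l + t, φ t l x)) < 0) :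
    ∀ l ∈ Icc (-1:ℝ) 1, ∀ t : ℝ, 0 ≤ t → l + t ∈ Icc (-1:ℝ) 1 →
      ∀ x : X, f (l, x) ≤ a → f (l + t, φ t l x) ≤ a :=
  stmt6_general v φ hφ0 hφ' f hf a hsign
end

section
/- Let H be a separable real Hilbert space with symmetry 𝒥, and f : ℝ × H → ℝ a C¹ map with ∇f(t, x) = 𝒥(x) − K(t, x), where K : ℝ × H → H is continuous with range contained in a compact set. Let (Hₙ) be an increasing sequence of finite-dimensional 𝒥-invariant subspaces with orthogonal projections Pₙ converging to the identity pointwise (hence uniformly on compact sets), and let fₙ be the restriction of f to ℝ × Hₙ. Suppose (zₙ) ⊂ ℝ² is a convergent sequence with zₙ ∈ S_{fₙ}, where S_g = {(t, y) ∈ ℝ² : ∃ x, g(t, x) = y and ∇g_t(x) = 0}. Then z = lim zₙ belongs to S_f. -/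
/-! A critical point `x` of `fₙ(t, ·)` solves `𝒥 x = Pₙ K(t, x)`, and since `𝒥` is an involution,
`xₙ = 𝒥 Pₙ K(tₙ, xₙ)`. Compactness of the range of `K` gives a subsequence along which
`K(tₙ, xₙ) → c`; the `Pₙ` are contractions converging pointwise to the identity, so also
`Pₙ K(tₙ, xₙ) → c` and hence `xₙ → 𝒥 c`. Continuity of `K` and `f` then shows that `𝒥 c` is a
critical point of `f(t, ·)` at level `y`, where `(t, y) = lim zₙ`. -/
open Filter Topology Set

theorem ContinuousLinearMap.involutive_of_eq_self_on_of_eq_neg_on_orthogonal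
    {𝕜 E : Type*} [RCLike 𝕜] [NormedAddCommGroup E] [InnerProductSpace 𝕜 E] [CompleteSpace E]
    {U : Submodule 𝕜 E} {J : E →L[𝕜] E} (hU : ∀ x ∈ U, J x = x) (hUperp : ∀ x ∈ Uᗮ, J x = -x) :
    Function.Involutive J := by
  set D : E →L[𝕜] E := J.comp J - ContinuousLinearMap.id 𝕜 E
  have hclosure : U.topologicalClosure ≤ (D : E →ₗ[𝕜] E).ker :=
    U.topologicalClosure_minimal (fun x hx => by simp [D, hU x hx]) D.isClosed_ker
  have hperp : Uᗮ ≤ (D : E →ₗ[𝕜] E).ker := fun x hx => by simp [D, hUperp x hx]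
  have htop : (D : E →ₗ[𝕜] E).ker = ⊤ := by
    rw [eq_top_iff, ← Uᗮ.sup_orthogonal_of_hasOrthogonalProjection,
      Submodule.orthogonal_orthogonal_eq_closure]
    exact sup_le hperp hclosure
  intro x
  have hx : D x = 0 := LinearMap.mem_ker.1 (htop ▸ Submodule.mem_top)
  simpa [D, sub_eq_zero] using hx

theorem norm_le_of_sub_mem_orthogonal {𝕜 E : Type*} [RCLike 𝕜] [NormedAddCommGroup E]
    [InnerProductSpace 𝕜 E] {U : Submodule 𝕜 E} {x u : E} (hu : u ∈ U) (hxu : x - u ∈ Uᗮ) :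
    ‖u‖ ≤ ‖x‖ := by
  have hpyth : ‖x‖ * ‖x‖ = ‖u‖ * ‖u‖ + ‖x - u‖ * ‖x - u‖ := by
    simpa using norm_add_sq_eq_norm_sq_add_norm_sq_of_inner_eq_zero u (x - u)
      (Submodule.inner_right_of_mem_orthogonal hu hxu)
  nlinarith [norm_nonneg u, norm_nonneg x, mul_self_nonneg ‖x - u‖]

theorem Filter.Tendsto.continuousLinearMap_apply_of_norm_le {ι 𝕜 E F : Type*}
    [NontriviallyNormedField 𝕜] [SeminormedAddCommGroup E] [NormedSpace 𝕜 E]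
    [SeminormedAddCommGroup F] [NormedSpace 𝕜 F] {l : Filter ι}
    {T : ι → E →L[𝕜] F} {C : ℝ} (hT : ∀ i y, ‖T i y‖ ≤ C * ‖y‖) {k : ι → E} {c : E} {d : F}
    (hk : Tendsto k l (𝓝 c)) (hTc : Tendsto (fun i => T i c) l (𝓝 d)) :
    Tendsto (fun i => T i (k i)) l (𝓝 d) := by
  rw [tendsto_iff_norm_sub_tendsto_zero] at hk hTc ⊢
  have hbound : ∀ i, ‖T i (k i) - d‖ ≤ C * ‖k i - c‖ + ‖T i c - d‖ := fun i => by
    calc ‖T i (k i) - d‖ = ‖T i (k i - c) + (T i c - d)‖ := by rw [map_sub]; abel_nf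
      _ ≤ C * ‖k i - c‖ + ‖T i c - d‖ := (norm_add_le _ _).trans (by gcongr; exact hT i _)
  exact squeeze_zero (fun i => norm_nonneg _) hbound (by simpa using (hk.const_mul C).add hTc)

theorem exists_subseq_tendsto_of_apply_eq_apply_compact {𝕜 T E : Type*}
    [NontriviallyNormedField 𝕜] [TopologicalSpace T] [NormedAddCommGroup E] [NormedSpace 𝕜 E]
    {J : E →L[𝕜] E} (hJ : Function.Involutive J) {P : ℕ → E →L[𝕜] E} {C : ℝ}
    (hP : ∀ n y, ‖P n y‖ ≤ C * ‖y‖) (hPid : ∀ y, Tendsto (fun n => P n y) atTop (𝓝 y))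
    {K : T × E → E} (hK : Continuous K) (hKcomp : ∃ S : Set E, IsCompact S ∧ range K ⊆ S)
    {t : ℕ → T} {t₀ : T} (ht : Tendsto t atTop (𝓝 t₀)) {x : ℕ → E}
    (hx : ∀ n, J (x n) = P n (K (t n, x n))) :
    ∃ x₀ : E, ∃ φ : ℕ → ℕ, StrictMono φ ∧ Tendsto (x ∘ φ) atTop (𝓝 x₀) ∧
      J x₀ = K (t₀, x₀) := by
  obtain ⟨S, hS, hKS⟩ := hKcomp
  obtain ⟨c, -, φ, hφ, hkc⟩ :=
    hS.tendsto_subseq (x := fun n => K (t n, x n)) fun n => hKS (mem_range_self _)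
  have hPk : Tendsto (fun j => P (φ j) (K (t (φ j), x (φ j)))) atTop (𝓝 c) :=
    hkc.continuousLinearMap_apply_of_norm_le (fun j => hP (φ j)) ((hPid c).comp hφ.tendsto_atTop)
  have hxφ : Tendsto (x ∘ φ) atTop (𝓝 (J c)) := by
    have hxeq : x ∘ φ = fun j => J (P (φ j) (K (t (φ j), x (φ j)))) := by
      funext j
      exact (hJ _).symm.trans (congrArg J (hx _))
    exact hxeq ▸ (J.continuous.tendsto c).comp hPk
  have hKlim : Tendsto (fun j => K (t (φ j), x (φ j))) atTop (𝓝 (K (t₀, J c))) :=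
    (hK.tendsto _).comp ((ht.comp hφ.tendsto_atTop).prodMk_nhds hxφ)
  exact ⟨J c, φ, hφ, hxφ, (hJ c).trans (tendsto_nhds_unique hkc hKlim)⟩

theorem stmt10_general
    {H : Type*} [NormedAddCommGroup H] [InnerProductSpace ℝ H] [CompleteSpace H]
    (Hp Hm : Submodule ℝ H) (hHm : Hm = Hpᗮ)
    (J : H →L[ℝ] H)
    (hJp : ∀ x ∈ Hp, J x = x) (hJm : ∀ x ∈ Hm, J x = -x)
    (f : ℝ × H → ℝ) (hf : ContDiff ℝ 1 f)
    (K : ℝ × H → H) (hK : Continuous K)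
    (hKcomp : ∃ C : Set H, IsCompact C ∧ range K ⊆ C)
    (Hn : ℕ → Submodule ℝ H)
    (P : ℕ → H →L[ℝ] H)
    (hP : ∀ n, ∀ x : H, P n x ∈ Hn n ∧ x - P n x ∈ (Hn n)ᗮ)
    (hPid : ∀ x : H, Tendsto (fun n => P n x) atTop (𝓝 x))
    (z : ℕ → ℝ × ℝ) (zlim : ℝ × ℝ)
    (hz : ∀ n, ∃ x ∈ Hn n, f ((z n).1, x) = (z n).2 ∧
      J x - P n (K ((z n).1, x)) = 0)
    (hzlim : Tendsto z atTop (𝓝 zlim)) :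
    ∃ x : H, f (zlim.1, x) = zlim.2 ∧ J x - K (zlim.1, x) = 0 := by
  subst hHm
  have hJ := J.involutive_of_eq_self_on_of_eq_neg_on_orthogonal hJp hJm
  have hPnorm : ∀ n y, ‖P n y‖ ≤ 1 * ‖y‖ := fun n y => by
    simpa using norm_le_of_sub_mem_orthogonal (hP n y).1 (hP n y).2
  choose x _ hxf hxJ using hz
  obtain ⟨x₀, φ, hφ, hxφ, hx₀⟩ := exists_subseq_tendsto_of_apply_eq_apply_compact hJ hPnorm hPid
    hK hKcomp hzlim.fst_nhds fun n => sub_eq_zero.1 (hxJ n)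
  have hfφ : Tendsto (fun j => f ((z (φ j)).1, x (φ j))) atTop (𝓝 (f (zlim.1, x₀))) :=
    (hf.continuous.tendsto _).comp ((hzlim.fst_nhds.comp hφ.tendsto_atTop).prodMk_nhds hxφ)
  refine ⟨x₀, tendsto_nhds_unique hfφ ?_, sub_eq_zero.2 hx₀⟩
  simpa only [hxf, Function.comp_def] using hzlim.snd_nhds.comp hφ.tendsto_atTop

theorem stmt10
    {H : Type*} [NormedAddCommGroup H] [InnerProductSpace ℝ H] [CompleteSpace H]
    [TopologicalSpace.SeparableSpace H]
    (Hp Hm : Submodule ℝ H) (hHm : Hm = Hpᗮ)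
    (J : H →L[ℝ] H)
    (hJp : ∀ x ∈ Hp, J x = x) (hJm : ∀ x ∈ Hm, J x = -x)
    (f : ℝ × H → ℝ) (hf : ContDiff ℝ 1 f)
    (K : ℝ × H → H) (hK : Continuous K)
    (hKcomp : ∃ C : Set H, IsCompact C ∧ range K ⊆ C)
    (hgrad : ∀ (l : ℝ) (x : H),
      HasGradientAt (fun y => f (l, y)) (J x - K (l, x)) x)
    (Hn : ℕ → Submodule ℝ H) (hfd : ∀ n, FiniteDimensional ℝ (Hn n))
    (hmono : Monotone Hn)
    (hJinv : ∀ n, ∀ x ∈ Hn n, J x ∈ Hn n)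
    (P : ℕ → H →L[ℝ] H)
    (hP : ∀ n, ∀ x : H, P n x ∈ Hn n ∧ x - P n x ∈ (Hn n)ᗮ)
    (hPid : ∀ x : H, Tendsto (fun n => P n x) atTop (𝓝 x))
    (z : ℕ → ℝ × ℝ) (zlim : ℝ × ℝ)
    (hz : ∀ n, ∃ x ∈ Hn n, f ((z n).1, x) = (z n).2 ∧
      J x - P n (K ((z n).1, x)) = 0)
    (hzlim : Tendsto z atTop (𝓝 zlim)) :
    ∃ x : H, f (zlim.1, x) = zlim.2 ∧ J x - K (zlim.1, x) = 0 :=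
  stmt10_general Hp Hm hHm J hJp hJm f hf K hK hKcomp Hn P hP hPid z zlim hz hzlim
end

section
/- Let H be a separable real Hilbert space, T : H → H a self-adjoint Fredholm operator, and Kₐ, K_b : H → H compact self-adjoint operators such that Lₐ = T + Kₐ and L_b = T + K_b. Then both dim(V⁻(Lₐ) ∩ V⁺(L_b)) and dim(V⁻(L_b) ∩ V⁺(Lₐ)) are finite, where V⁻(L), V⁺(L) denote the negative and positive eigenspaces of a self-adjoint Fredholm operator L. -/
/-!
On `V⁻(Lₐ)` the operator `Lₐ` is injective, and being a compact perturbation of `T` (closed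
range, finite-dimensional kernel) it is bounded below there. Cauchy–Schwarz for the semidefinite
form `-⟪Lₐ ·, ·⟫`, applied to `x` and `Lₐ x`, turns this into `⟪Lₐ x, x⟫ ≤ -c ‖x‖²` on `V⁻(Lₐ)`;
likewise `⟪L_b x, x⟫ ≥ c ‖x‖²` on `V⁺(L_b)`. On `V⁻(Lₐ) ∩ V⁺(L_b)` the compact operator
`K_b - Kₐ = L_b - Lₐ` thus satisfies `⟪(K_b - Kₐ) x, x⟫ ≥ 2c ‖x‖²`, so it is bounded below on a
closed subspace, which is then finite-dimensional.
-/

open scoped RealInnerProductSpace NNReal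
open Metric

theorem IsCompactOperator.prodMk {X Y Z : Type*} [Zero X] [TopologicalSpace X]
    [TopologicalSpace Y] [TopologicalSpace Z] {f : X → Y} {g : X → Z}
    (hf : IsCompactOperator f) (hg : IsCompactOperator g) :
    IsCompactOperator fun x => (f x, g x) := by
  obtain ⟨K, hK, hfK⟩ := hf
  obtain ⟨L, hL, hgL⟩ := hg
  exact ⟨K ×ˢ L, hK.prod hL, Filter.inter_mem hfK hgL⟩

section NormedSpace

variable {𝕜 E F G : Type*} [NontriviallyNormedField 𝕜]
  [NormedAddCommGroup E] [NormedSpace 𝕜 E] [NormedAddCommGroup F] [NormedSpace 𝕜 F]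
  [NormedAddCommGroup G] [NormedSpace 𝕜 G]

theorem IsCompactOperator.finiteDimensional_of_antilipschitz [CompleteSpace 𝕜] [CompleteSpace E]
    {f : E →L[𝕜] F} (hf : IsCompactOperator f) {C : ℝ≥0} (hC : AntilipschitzWith C f) :
    FiniteDimensional 𝕜 E := by
  obtain ⟨K, hK, hfK⟩ := hf
  exact .of_isCompactOperator_id
    ⟨f ⁻¹' K, (hC.isClosedEmbedding f.uniformContinuous).isCompact_preimage hK, hfK⟩

theorem ContinuousLinearMap.antilipschitzWith_add_prod_prod {T K : E →L[𝕜] F} {P : E →L[𝕜] G}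
    {C : ℝ≥0} (h : AntilipschitzWith C (T.prod P)) :
    AntilipschitzWith (2 * C) ((T + K).prod (K.prod P)) := by
  refine antilipschitz_of_bound _ fun x => ?_
  have hx := (T.prod P).bound_of_antilipschitz h x
  simp only [prod_apply, add_apply, Prod.norm_def] at hx ⊢
  set M := max ‖T x + K x‖ (max ‖K x‖ ‖P x‖)
  have hTKx : ‖T x + K x‖ ≤ M := le_max_left _ _
  have hKx : ‖K x‖ ≤ M := (le_max_left _ _).trans (le_max_right _ _)
  have hPx : ‖P x‖ ≤ M := (le_max_right _ _).trans (le_max_right _ _)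
  have hTx : ‖T x‖ ≤ ‖T x + K x‖ + ‖K x‖ := by simpa using norm_sub_le (T x + K x) (K x)
  calc ‖x‖ ≤ C * max ‖T x‖ ‖P x‖ := hx
    _ ≤ C * (2 * M) := by gcongr; exact max_le (by linarith) (by linarith [norm_nonneg (P x)])
    _ = ↑(2 * C) * M := by push_cast; ring

end NormedSpace

section RCLike

variable {𝕜 E F G : Type*} [RCLike 𝕜]
  [NormedAddCommGroup E] [NormedSpace 𝕜 E] [NormedAddCommGroup F] [NormedSpace 𝕜 F]
  [NormedAddCommGroup G] [NormedSpace 𝕜 G]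

/-- Peetre's lemma. -/
theorem IsCompactOperator.exists_antilipschitzWith_of_antilipschitzWith_prod [CompleteSpace E]
    {S : E →L[𝕜] F} {K : E →L[𝕜] G} (hK : IsCompactOperator K) (hS : Function.Injective S)
    {C : ℝ≥0} (hSK : AntilipschitzWith C (S.prod K)) : ∃ C', AntilipschitzWith C' S := by
  set A := S.prod K
  -- The closed set `A '' sphere 0 1` misses the compact set `{0} ×ˢ closure (K '' sphere 0 1)`,
  -- and for `x` on the sphere the distance from `A x` to `(0, K x)` is `‖S x‖`.
  have hcompact : IsCompact ({(0 : F)} ×ˢ closure (K '' sphere 0 1)) :=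
    isCompact_singleton.prod (hK.isCompact_closure_image_of_bounded isBounded_sphere)
  have hclosed : IsClosed (A '' sphere 0 1) :=
    (hSK.isClosedEmbedding A.uniformContinuous).isClosedMap _ isClosed_sphere
  have hdisjoint : Disjoint ({(0 : F)} ×ˢ closure (K '' sphere 0 1)) (A '' sphere 0 1) := by
    rw [Set.disjoint_left]
    rintro _ ⟨hSx, -⟩ ⟨x, hx, rfl⟩
    obtain rfl : x = 0 := hS (by simpa [A] using hSx)
    simp at hx
  obtain ⟨r, hr, hsep⟩ := Metric.exists_pos_forall_lt_edist hcompact hclosed hdisjoint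
  refine ⟨r⁻¹, antilipschitz_of_bound_of_norm_one S fun x hx => ?_⟩
  have hx' : x ∈ sphere (0 : E) 1 := by simpa using hx
  have hrx := hsep (0, K x) ⟨rfl, subset_closure ⟨x, hx', rfl⟩⟩ (A x) ⟨x, hx', rfl⟩
  have hr' : (r : ℝ) < ‖S x‖ := by
    simpa [A, Prod.edist_eq, edist_zero_left, ← NNReal.coe_lt_coe] using hrx
  rw [NNReal.coe_inv, ← div_eq_inv_mul, one_le_div (NNReal.coe_pos.mpr hr)]
  exact hr'.le

end RCLike

section InnerProductSpace

variable {𝕜 E F : Type*} [RCLike 𝕜] [NormedAddCommGroup E] [InnerProductSpace 𝕜 E]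
  [CompleteSpace E] [NormedAddCommGroup F] [NormedSpace 𝕜 F] [CompleteSpace F]

theorem ContinuousLinearMap.exists_antilipschitzWith_prod_orthogonalProjectionOnto_ker
    (T : E →L[𝕜] F) (hT : IsClosed (LinearMap.range (T : E →ₗ[𝕜] F) : Set F)) :
    ∃ C, AntilipschitzWith C
      (T.prod (LinearMap.ker (T : E →ₗ[𝕜] F)).orthogonalProjectionOnto) := by
  set N := LinearMap.ker (T : E →ₗ[𝕜] F)
  set P := N.orthogonalProjectionOnto
  refine (T.prod P).antilipschitz_of_injective_of_isClosed_range ?_ ?_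
  · refine (injective_iff_map_eq_zero (T.prod P)).mpr fun x hx => ?_
    obtain ⟨hTx, hPx⟩ := Prod.ext_iff.mp hx
    exact N.orthogonal_disjoint.le_bot
      ⟨hTx, Submodule.orthogonalProjectionOnto_eq_zero_iff.mp hPx⟩
  · have hrange : Set.range (T.prod P) = Set.range T ×ˢ Set.univ := by
      refine (Set.range_subset_iff.mpr fun x =>
        Set.mk_mem_prod (Set.mem_range_self x) (Set.mem_univ _)).antisymm ?_
      rintro ⟨_, k⟩ ⟨⟨x, rfl⟩, -⟩
      refine ⟨x - P x + k, Prod.ext ?_ ?_⟩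
      · simp [show T (P x) = 0 from (P x).2, show T k = 0 from k.2]
      · change P (x - P x + k) = k
        rw [map_add, map_sub, Submodule.orthogonalProjectionOnto_mem_subspace_eq_self,
          Submodule.orthogonalProjectionOnto_mem_subspace_eq_self, sub_self, zero_add]
    rw [hrange]
    exact (LinearMap.coe_range (T : E →ₗ[𝕜] F) ▸ hT).prod isClosed_univ

theorem ContinuousLinearMap.exists_norm_le_mul_norm_add_compact_apply (T K : E →L[𝕜] F)
    (hTker : FiniteDimensional 𝕜 (LinearMap.ker (T : E →ₗ[𝕜] F)))
    (hTrange : IsClosed (LinearMap.range (T : E →ₗ[𝕜] F) : Set F))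
    (hK : IsCompactOperator K) {V : Submodule 𝕜 E} (hV : IsClosed (V : Set E))
    (hinj : ∀ x ∈ V, (T + K) x = 0 → x = 0) :
    ∃ C : ℝ≥0, ∀ x ∈ V, ‖x‖ ≤ C * ‖(T + K) x‖ := by
  have : CompleteSpace V := hV.completeSpace_coe
  set P := (LinearMap.ker (T : E →ₗ[𝕜] F)).orthogonalProjectionOnto
  set S := (T + K).comp V.subtypeL
  obtain ⟨C, hC⟩ := T.exists_antilipschitzWith_prod_orthogonalProjectionOnto_ker hTrange
  have hKP : IsCompactOperator ((K.prod P).comp V.subtypeL) :=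
    (hK.prodMk (isCompactOperator_of_locallyCompactSpace_dom P)).comp_clm V.subtypeL
  have hS : Function.Injective S :=
    (injective_iff_map_eq_zero S).mpr fun x hx => Subtype.ext (hinj x x.2 hx)
  have hSKP : AntilipschitzWith (1 * (2 * C)) (S.prod ((K.prod P).comp V.subtypeL)) :=
    (T.antilipschitzWith_add_prod_prod hC).comp (AntilipschitzWith.subtype_coe (V : Set E))
  obtain ⟨C', hC'⟩ := hKP.exists_antilipschitzWith_of_antilipschitzWith_prod hS hSKP
  exact ⟨C', fun x hx => S.bound_of_antilipschitz hC' ⟨x, hx⟩⟩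

end InnerProductSpace

section RealInnerProductSpace

variable {H : Type*} [NormedAddCommGroup H] [InnerProductSpace ℝ H] [CompleteSpace H]

theorem IsSelfAdjoint.inner_apply_sq_le_of_inner_nonneg {S : H →L[ℝ] H} (hS : IsSelfAdjoint S)
    {V : Submodule ℝ H} (hV : ∀ x ∈ V, 0 ≤ ⟪S x, x⟫) {x y : H} (hx : x ∈ V) (hy : y ∈ V) :
    ⟪S x, y⟫ ^ 2 ≤ ⟪S x, x⟫ * ⟪S y, y⟫ := by
  have hsymm : ⟪S y, x⟫ = ⟪S x, y⟫ := (hS.isSymmetric y x).trans (real_inner_comm _ _)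
  have hquad : ∀ t : ℝ, 0 ≤ ⟪S y, y⟫ * (t * t) + 2 * ⟪S x, y⟫ * t + ⟪S x, x⟫ := fun t => by
    have h := hV (x + t • y) (V.add_mem hx (V.smul_mem t hy))
    simp only [map_add, map_smul, inner_add_left, inner_add_right, real_inner_smul_left,
      real_inner_smul_right, hsymm] at h
    linarith
  have hdiscrim := discrim_le_zero hquad
  rw [discrim] at hdiscrim
  linarith

theorem IsSelfAdjoint.norm_apply_sq_le_opNorm_mul_inner {S : H →L[ℝ] H} (hS : IsSelfAdjoint S)
    {V : Submodule ℝ H} (hSV : ∀ x ∈ V, S x ∈ V) (hV : ∀ x ∈ V, 0 ≤ ⟪S x, x⟫) {x : H}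
    (hx : x ∈ V) : ‖S x‖ ^ 2 ≤ ‖S‖ * ⟪S x, x⟫ := by
  have hCS := hS.inner_apply_sq_le_of_inner_nonneg hV hx (hSV x hx)
  rw [real_inner_self_eq_norm_sq] at hCS
  have hSSx : ⟪S (S x), S x⟫ ≤ ‖S‖ * ‖S x‖ ^ 2 :=
    calc ⟪S (S x), S x⟫ ≤ ‖S (S x)‖ * ‖S x‖ := real_inner_le_norm _ _
      _ ≤ ‖S‖ * ‖S x‖ * ‖S x‖ := by gcongr; exact S.le_opNorm _
      _ = ‖S‖ * ‖S x‖ ^ 2 := by ring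
  rcases (norm_nonneg (S x)).eq_or_lt with hSx | hSx
  · rw [← hSx]
    simpa using mul_nonneg (norm_nonneg S) (hV x hx)
  · refine le_of_mul_le_mul_right ?_ (pow_pos hSx 2)
    nlinarith [hV x hx]

theorem IsSelfAdjoint.norm_sq_le_mul_inner {S : H →L[ℝ] H} (hS : IsSelfAdjoint S)
    {V : Submodule ℝ H} (hSV : ∀ x ∈ V, S x ∈ V) (hV : ∀ x ∈ V, 0 ≤ ⟪S x, x⟫) {C : ℝ}
    (hC : ∀ x ∈ V, ‖x‖ ≤ C * ‖S x‖) {x : H} (hx : x ∈ V) :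
    ‖x‖ ^ 2 ≤ C ^ 2 * ‖S‖ * ⟪S x, x⟫ :=
  calc ‖x‖ ^ 2 ≤ (C * ‖S x‖) ^ 2 := pow_le_pow_left₀ (norm_nonneg x) (hC x hx) 2
    _ = C ^ 2 * ‖S x‖ ^ 2 := mul_pow _ _ _
    _ ≤ C ^ 2 * (‖S‖ * ⟪S x, x⟫) := by gcongr; exact hS.norm_apply_sq_le_opNorm_mul_inner hSV hV hx
    _ = C ^ 2 * ‖S‖ * ⟪S x, x⟫ := by ring

theorem IsCompactOperator.finiteDimensional_of_norm_sq_le_inner {K : H →L[ℝ] H}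
    (hK : IsCompactOperator K) {W : Submodule ℝ H} (hW : IsClosed (W : Set H))
    (hKW : ∀ x ∈ W, ‖x‖ ^ 2 ≤ ⟪K x, x⟫) : FiniteDimensional ℝ W := by
  have : CompleteSpace W := hW.completeSpace_coe
  refine (hK.comp_clm W.subtypeL).finiteDimensional_of_antilipschitz
    ((K.comp W.subtypeL).antilipschitz_of_bound (K := 1) fun x => ?_)
  have hx : ‖(x : H)‖ * ‖(x : H)‖ ≤ ‖K x‖ * ‖(x : H)‖ := by
    rw [← sq]; exact (hKW x x.2).trans (real_inner_le_norm _ _)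
  rcases (norm_nonneg (x : H)).eq_or_lt with hx0 | hx0
  · simp [Submodule.coe_norm, ← hx0]
  · simpa using le_of_mul_le_mul_right hx hx0

theorem finiteDimensional_inf_of_inner_nonpos_of_inner_nonneg {S₁ S₂ : H →L[ℝ] H}
    (hS₁ : IsSelfAdjoint S₁) (hS₂ : IsSelfAdjoint S₂) (hS₁₂ : IsCompactOperator (S₂ - S₁))
    {V₁ V₂ : Submodule ℝ H} (hV₁ : IsClosed (V₁ : Set H)) (hV₂ : IsClosed (V₂ : Set H))
    (hS₁V₁ : ∀ x ∈ V₁, S₁ x ∈ V₁) (hS₂V₂ : ∀ x ∈ V₂, S₂ x ∈ V₂)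
    (hV₁neg : ∀ x ∈ V₁, ⟪S₁ x, x⟫ ≤ 0) (hV₂pos : ∀ x ∈ V₂, 0 ≤ ⟪S₂ x, x⟫)
    {C₁ C₂ : ℝ} (hC₁ : ∀ x ∈ V₁, ‖x‖ ≤ C₁ * ‖S₁ x‖) (hC₂ : ∀ x ∈ V₂, ‖x‖ ≤ C₂ * ‖S₂ x‖) :
    FiniteDimensional ℝ ↥(V₁ ⊓ V₂) := by
  set a := C₁ ^ 2 * ‖S₁‖
  set b := C₂ ^ 2 * ‖S₂‖
  have hK : IsCompactOperator ((a + b) • (S₂ - S₁)) := hS₁₂.smul (a + b)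
  refine hK.finiteDimensional_of_norm_sq_le_inner (hV₁.inter hV₂) ?_
  rintro x ⟨hx₁, hx₂⟩
  have h₁ : ‖x‖ ^ 2 ≤ a * -⟪S₁ x, x⟫ := by
    simpa [a, inner_neg_left] using hS₁.neg.norm_sq_le_mul_inner
      (fun y hy => by simpa using V₁.neg_mem (hS₁V₁ y hy))
      (fun y hy => by simpa [inner_neg_left] using hV₁neg y hy) (by simpa using hC₁) hx₁
  have h₂ : ‖x‖ ^ 2 ≤ b * ⟪S₂ x, x⟫ := hS₂.norm_sq_le_mul_inner hS₂V₂ hV₂pos hC₂ hx₂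
  have ha : 0 ≤ a := by positivity
  have hb : 0 ≤ b := by positivity
  have hq₁ : 0 ≤ -⟪S₁ x, x⟫ := neg_nonneg.mpr (hV₁neg x hx₁)
  have hq₂ := hV₂pos x hx₂
  simp only [smul_apply, sub_apply, real_inner_smul_left, inner_sub_left]
  nlinarith [mul_nonneg ha hq₂, mul_nonneg hb hq₁]

theorem finiteDimensional_inf_of_inner_neg_of_inner_pos (T K₁ K₂ : H →L[ℝ] H)
    (hT : IsSelfAdjoint T) (hK₁ : IsSelfAdjoint K₁) (hK₂ : IsSelfAdjoint K₂)
    (hTker : FiniteDimensional ℝ (LinearMap.ker (T : H →ₗ[ℝ] H)))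
    (hTrange : IsClosed (LinearMap.range (T : H →ₗ[ℝ] H) : Set H))
    (hK₁c : IsCompactOperator K₁) (hK₂c : IsCompactOperator K₂)
    {V₁ V₂ : Submodule ℝ H} (hV₁ : IsClosed (V₁ : Set H)) (hV₂ : IsClosed (V₂ : Set H))
    (hV₁inv : ∀ x ∈ V₁, (T + K₁) x ∈ V₁) (hV₂inv : ∀ x ∈ V₂, (T + K₂) x ∈ V₂)
    (hV₁neg : ∀ x ∈ V₁, x ≠ 0 → ⟪(T + K₁) x, x⟫ < 0)
    (hV₂pos : ∀ x ∈ V₂, x ≠ 0 → 0 < ⟪(T + K₂) x, x⟫) :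
    FiniteDimensional ℝ ↥(V₁ ⊓ V₂) := by
  obtain ⟨C₁, hC₁⟩ := T.exists_norm_le_mul_norm_add_compact_apply K₁ hTker hTrange hK₁c hV₁
    fun x hx hx0 => by_contra fun hne => (hV₁neg x hx hne).ne (by simp [hx0])
  obtain ⟨C₂, hC₂⟩ := T.exists_norm_le_mul_norm_add_compact_apply K₂ hTker hTrange hK₂c hV₂
    fun x hx hx0 => by_contra fun hne => (hV₂pos x hx hne).ne' (by simp [hx0])
  refine finiteDimensional_inf_of_inner_nonpos_of_inner_nonneg (hT.add hK₁) (hT.add hK₂)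
    (by simpa using hK₂c.sub hK₁c) hV₁ hV₂ hV₁inv hV₂inv ?_ ?_ hC₁ hC₂
  · intro x hx
    rcases eq_or_ne x 0 with rfl | hx0
    · simp
    · exact (hV₁neg x hx hx0).le
  · intro x hx
    rcases eq_or_ne x 0 with rfl | hx0
    · simp
    · exact (hV₂pos x hx hx0).le

end RealInnerProductSpace

theorem stmt12_general
    {H : Type*} [NormedAddCommGroup H] [InnerProductSpace ℝ H] [CompleteSpace H]
    (T Ka Kb : H →L[ℝ] H)
    (hT : IsSelfAdjoint T)
    (hTker : FiniteDimensional ℝ (LinearMap.ker (T : H →ₗ[ℝ] H)))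
    (hTrange : IsClosed (LinearMap.range (T : H →ₗ[ℝ] H) : Set H))
    (hKa : IsSelfAdjoint Ka) (hKb : IsSelfAdjoint Kb)
    (hKac : IsCompactOperator Ka) (hKbc : IsCompactOperator Kb)
    (La Lb : H →L[ℝ] H) (hLa : La = T + Ka) (hLb : Lb = T + Kb)
    (Vam Vap Vbm Vbp : Submodule ℝ H)
    (hVamc : IsClosed (Vam : Set H)) (hVapc : IsClosed (Vap : Set H))
    (hVbmc : IsClosed (Vbm : Set H)) (hVbpc : IsClosed (Vbp : Set H))
    -- orthogonal splitting for La
    (hainvm : ∀ x ∈ Vam, La x ∈ Vam) (hainvp : ∀ x ∈ Vap, La x ∈ Vap)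
    (haneg : ∀ x ∈ Vam, x ≠ 0 → ⟪La x, x⟫ < 0)
    (hapos : ∀ x ∈ Vap, x ≠ 0 → 0 < ⟪La x, x⟫)
    -- orthogonal splitting for Lb
    (hbinvm : ∀ x ∈ Vbm, Lb x ∈ Vbm) (hbinvp : ∀ x ∈ Vbp, Lb x ∈ Vbp)
    (hbneg : ∀ x ∈ Vbm, x ≠ 0 → ⟪Lb x, x⟫ < 0)
    (hbpos : ∀ x ∈ Vbp, x ≠ 0 → 0 < ⟪Lb x, x⟫) :
    FiniteDimensional ℝ ↥(Vam ⊓ Vbp) ∧ FiniteDimensional ℝ ↥(Vbm ⊓ Vap) := by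
  subst hLa hLb
  exact ⟨finiteDimensional_inf_of_inner_neg_of_inner_pos T Ka Kb hT hKa hKb hTker hTrange hKac hKbc
      hVamc hVbpc hainvm hbinvp haneg hbpos,
    finiteDimensional_inf_of_inner_neg_of_inner_pos T Kb Ka hT hKb hKa hTker hTrange hKbc hKac
      hVbmc hVapc hbinvm hainvp hbneg hapos⟩

theorem stmt12
    {H : Type*} [NormedAddCommGroup H] [InnerProductSpace ℝ H] [CompleteSpace H]
    [TopologicalSpace.SeparableSpace H]
    (T Ka Kb : H →L[ℝ] H)
    (hT : IsSelfAdjoint T)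
    (hTker : FiniteDimensional ℝ (LinearMap.ker (T : H →ₗ[ℝ] H)))
    (hTrange : IsClosed (LinearMap.range (T : H →ₗ[ℝ] H) : Set H))
    (hTcoker : FiniteDimensional ℝ (H ⧸ LinearMap.range (T : H →ₗ[ℝ] H)))
    (hKa : IsSelfAdjoint Ka) (hKb : IsSelfAdjoint Kb)
    (hKac : IsCompactOperator Ka) (hKbc : IsCompactOperator Kb)
    (La Lb : H →L[ℝ] H) (hLa : La = T + Ka) (hLb : Lb = T + Kb)
    (Vam Vap Vbm Vbp : Submodule ℝ H)
    (hVamc : IsClosed (Vam : Set H)) (hVapc : IsClosed (Vap : Set H))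
    (hVbmc : IsClosed (Vbm : Set H)) (hVbpc : IsClosed (Vbp : Set H))
    -- orthogonal splitting for La
    (haorth : ∀ x ∈ Vam, ∀ y ∈ Vap, ⟪x, y⟫ = 0)
    (haorthm : ∀ x ∈ Vam, ∀ y ∈ LinearMap.ker (La : H →ₗ[ℝ] H), ⟪x, y⟫ = 0)
    (haorthp : ∀ x ∈ Vap, ∀ y ∈ LinearMap.ker (La : H →ₗ[ℝ] H), ⟪x, y⟫ = 0)
    (hasup : Vam ⊔ Vap ⊔ LinearMap.ker (La : H →ₗ[ℝ] H) = ⊤)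
    (hainvm : ∀ x ∈ Vam, La x ∈ Vam) (hainvp : ∀ x ∈ Vap, La x ∈ Vap)
    (haneg : ∀ x ∈ Vam, x ≠ 0 → ⟪La x, x⟫ < 0)
    (hapos : ∀ x ∈ Vap, x ≠ 0 → 0 < ⟪La x, x⟫)
    -- orthogonal splitting for Lb
    (hborth : ∀ x ∈ Vbm, ∀ y ∈ Vbp, ⟪x, y⟫ = 0)
    (hborthm : ∀ x ∈ Vbm, ∀ y ∈ LinearMap.ker (Lb : H →ₗ[ℝ] H), ⟪x, y⟫ = 0)
    (hborthp : ∀ x ∈ Vbp, ∀ y ∈ LinearMap.ker (Lb : H →ₗ[ℝ] H), ⟪x, y⟫ = 0)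
    (hbsup : Vbm ⊔ Vbp ⊔ LinearMap.ker (Lb : H →ₗ[ℝ] H) = ⊤)
    (hbinvm : ∀ x ∈ Vbm, Lb x ∈ Vbm) (hbinvp : ∀ x ∈ Vbp, Lb x ∈ Vbp)
    (hbneg : ∀ x ∈ Vbm, x ≠ 0 → ⟪Lb x, x⟫ < 0)
    (hbpos : ∀ x ∈ Vbp, x ≠ 0 → 0 < ⟪Lb x, x⟫) :
    FiniteDimensional ℝ ↥(Vam ⊓ Vbp) ∧ FiniteDimensional ℝ ↥(Vbm ⊓ Vap) :=
  stmt12_general T Ka Kb hT hTker hTrange hKa hKb hKac hKbc La Lb hLa hLb Vam Vap Vbm Vbp hVamc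
    hVapc hVbmc hVbpc hainvm hainvp haneg hapos hbinvm hbinvp hbneg hbpos
end
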